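/- arXiv:2602.03500 — 4 statements merged into one kernel-verified Lean document; each statement's English description precedes it below -/
import Mathlib

section
/- Let n ≥ 1 be an integer. For every n-th tropical entire function f and every r > 0 one has (f(r) + f(−r))/2 ≥ f(0). Moreover, if f is n-th tropical nowhere vanishing entire, then (f(r) + f(−r))/2 = f(0) for all r > 0. -/
open Filter MeasureTheory Asymptotics Polynomial
open scoped Classical

noncomputable section

namespace Trop

/-- sign from the right: `sgn(x⁺)` (equal to `sgn x` for `x ≠ 0`, and `+1` at `0`). -/
def sgnR (x : ℝ) : ℝ := if x < 0 then -1 else 1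

/-- sign from the left: `sgn(x⁻)` (equal to `sgn x` for `x ≠ 0`, and `-1` at `0`). -/
def sgnL (x : ℝ) : ℝ := if 0 < x then 1 else -1

/-- `p` is the polynomial piece of `f` immediately to the right of `x`. -/
def IsRightPiece (f : ℝ → ℝ) (x : ℝ) (p : Polynomial ℝ) : Prop :=
  ∃ ε > (0 : ℝ), ∀ y ∈ Set.Ico x (x + ε), f y = p.eval y

/-- `p` is the polynomial piece of `f` immediately to the left of `x`. -/
def IsLeftPiece (f : ℝ → ℝ) (x : ℝ) (p : Polynomial ℝ) : Prop :=
  ∃ ε > (0 : ℝ), ∀ y ∈ Set.Ioc (x - ε) x, f y = p.eval y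

/-- The right polynomial piece of `f` at `x` (junk value `0` if none exists). -/
def rightPoly (f : ℝ → ℝ) (x : ℝ) : Polynomial ℝ :=
  if h : ∃ p, IsRightPiece f x p then h.choose else 0

/-- The left polynomial piece of `f` at `x` (junk value `0` if none exists). -/
def leftPoly (f : ℝ → ℝ) (x : ℝ) : Polynomial ℝ :=
  if h : ∃ p, IsLeftPiece f x p then h.choose else 0

/-- The one-sided `j`-th derivative `f^{(j)}(x⁺)` from the right. -/
def rderiv (f : ℝ → ℝ) (j : ℕ) (x : ℝ) : ℝ :=
  ((fun q : Polynomial ℝ => Polynomial.derivative q)^[j] (rightPoly f x)).eval x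

/-- The one-sided `j`-th derivative `f^{(j)}(x⁻)` from the left. -/
def lderiv (f : ℝ → ℝ) (j : ℕ) (x : ℝ) : ℝ :=
  ((fun q : Polynomial ℝ => Polynomial.derivative q)^[j] (leftPoly f x)).eval x

/-- `ω_f^{(j)}(x) = (sgn^{j+1}(x⁺) f^{(j)}(x⁺) − sgn^{j+1}(x⁻) f^{(j)}(x⁻))/j!`. -/
def omega (f : ℝ → ℝ) (j : ℕ) (x : ℝ) : ℝ :=
  (sgnR x ^ (j + 1) * rderiv f j x - sgnL x ^ (j + 1) * lderiv f j x) / (Nat.factorial j : ℝ)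

/-- `τ_f^{(j)}(x) = (f^{(j)}(x⁺) − f^{(j)}(x⁻))/j!`. -/
def tau (f : ℝ → ℝ) (j : ℕ) (x : ℝ) : ℝ :=
  (rderiv f j x - lderiv f j x) / (Nat.factorial j : ℝ)

/-- A continuous piecewise polynomial function: there is a strictly increasing doubly infinite
sequence of breakpoints with no finite accumulation point, on each segment `f` agrees with a
polynomial of degree at most `n`, and the supremum of the degrees of the pieces equals `n`. -/
def IsNthPiecewisePoly (n : ℕ) (f : ℝ → ℝ) : Prop :=
  Continuous f ∧
  ∃ (x : ℤ → ℝ) (p : ℤ → Polynomial ℝ),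
    StrictMono x ∧
    Tendsto x atTop atTop ∧ Tendsto x atBot atBot ∧
    (∀ i : ℤ, ∀ y ∈ Set.Icc (x (i - 1)) (x i), f y = (p i).eval y) ∧
    (∀ i : ℤ, (p i).natDegree ≤ n) ∧
    (∃ i : ℤ, (p i).natDegree = n)

/-- `f` has no `j`-th poles for any `j ≥ 1`. -/
def NoPoles (f : ℝ → ℝ) : Prop := ∀ j : ℕ, 1 ≤ j → ∀ x : ℝ, 0 ≤ omega f j x

/-- `f` has no `j`-th roots for any `j ≥ 1`. -/
def NoRoots (f : ℝ → ℝ) : Prop := ∀ j : ℕ, 1 ≤ j → ∀ x : ℝ, omega f j x ≤ 0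

/-- An `n`-th tropical meromorphic function. -/
def IsTropicalMeromorphic (n : ℕ) (f : ℝ → ℝ) : Prop :=
  IsNthPiecewisePoly n f ∧ ¬ ∃ c : ℝ, ∀ x : ℝ, f x = c

/-- An `n`-th tropical entire function (no poles; constants allowed when `n = 0`). -/
def IsTropicalEntire (n : ℕ) (f : ℝ → ℝ) : Prop :=
  IsNthPiecewisePoly n f ∧ NoPoles f

/-- The `n`-th max-plus proximity function `m(r, f)`. -/
def mProx (r : ℝ) (f : ℝ → ℝ) : ℝ := (max (f r) 0 + max (f (-r)) 0) / 2

/-- The `j`-th integrated max-plus counting function of poles,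
`N^{(j)}(r, f) = (1/2) Σ_z |ω_f^{(j)}(z)| (r − |z|)^j` over the `j`-th poles `z` in `(−r, r)`. -/
def Npole (j : ℕ) (r : ℝ) (f : ℝ → ℝ) : ℝ :=
  (1 / 2) * ∑' z : {z : ℝ // z ∈ Set.Ioo (-r) r ∧ omega f j z < 0},
    |omega f j z.1| * (r - |z.1|) ^ j

/-- The `j`-th integrated counting function of roots, `N^{(j)}(r, 1₀ ⊘ f)`. -/
def Nroot (j : ℕ) (r : ℝ) (f : ℝ → ℝ) : ℝ :=
  (1 / 2) * ∑' z : {z : ℝ // z ∈ Set.Ioo (-r) r ∧ 0 < omega f j z},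
    |omega f j z.1| * (r - |z.1|) ^ j

/-- Partial pole-counting function restricted to a set `I`. -/
def NpoleIn (j : ℕ) (r : ℝ) (I : Set ℝ) (f : ℝ → ℝ) : ℝ :=
  (1 / 2) * ∑' z : {z : ℝ // z ∈ I ∧ omega f j z < 0},
    |omega f j z.1| * (r - |z.1|) ^ j

/-- Partial root-counting function restricted to a set `I`. -/
def NrootIn (j : ℕ) (r : ℝ) (I : Set ℝ) (f : ℝ → ℝ) : ℝ :=
  (1 / 2) * ∑' z : {z : ℝ // z ∈ I ∧ 0 < omega f j z},
    |omega f j z.1| * (r - |z.1|) ^ j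

/-- The `n`-th max-plus characteristic function `T(r, f)`. -/
def Tchar (n : ℕ) (r : ℝ) (f : ℝ → ℝ) : ℝ :=
  mProx r f + ∑ j ∈ Finset.Icc 1 n, Npole j r f

/-- The hyper-order `ρ₂(f) = limsup_{r→∞} log log T(r,f) / log r`. -/
def hyperOrder (n : ℕ) (f : ℝ → ℝ) : ℝ :=
  Filter.limsup (fun r : ℝ => Real.log (Real.log (Tchar n r f)) / Real.log r) Filter.atTop

/-- `E ⊆ (1, ∞)` has finite logarithmic measure: `∫_E dt/t < ∞`. -/
def FiniteLogMeasure (E : Set ℝ) : Prop :=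
  E ⊆ Set.Ioi 1 ∧ (∫⁻ t in E, ENNReal.ofReal (1 / t)) < ⊤

/-- A well defined polynomial: apart from the constant term, only the coefficients whose index
has the same parity as the degree survive, and they all have the same sign. -/
def WellDefinedPoly (p : Polynomial ℝ) : Prop :=
  (∀ k : ℕ, 1 ≤ k → k % 2 ≠ p.natDegree % 2 → p.coeff k = 0) ∧
  ((∀ k : ℕ, 1 ≤ k → 0 ≤ p.coeff k) ∨ (∀ k : ℕ, 1 ≤ k → p.coeff k ≤ 0))

/-- A piecewise polynomial function is well defined if all its polynomial pieces are. -/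
def WellDefinedFn (f : ℝ → ℝ) : Prop :=
  ∀ x : ℝ, WellDefinedPoly (rightPoly f x) ∧ WellDefinedPoly (leftPoly f x)

/-- The pointwise maximum of the components of a representation of a tropical holomorphic curve. -/
def Fmax {m : ℕ} (f : Fin (m + 1) → ℝ → ℝ) (x : ℝ) : ℝ := ⨆ i, f i x

/-- The tropical Cartan characteristic function of the curve represented by `f`. -/
def TCartan {m : ℕ} (f : Fin (m + 1) → ℝ → ℝ) (r : ℝ) : ℝ :=
  (Fmax f r + Fmax f (-r)) / 2 - Fmax f 0

/-- `f` is a representation of an `n`-th tropical holomorphic curve `ℝ → TP^m`: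
each component is an `n_i`-th tropical entire function and `max_i n_i = n`. -/
def IsHoloCurveRep (n : ℕ) {m : ℕ} (f : Fin (m + 1) → ℝ → ℝ) : Prop :=
  ∃ d : Fin (m + 1) → ℕ, (∀ i, IsTropicalEntire (d i) (f i)) ∧ Finset.univ.sup d = n

/-- A reduced representation: the components have no common `j`-th roots. -/
def ReducedRep {m : ℕ} (f : Fin (m + 1) → ℝ → ℝ) : Prop :=
  ¬ ∃ (j : ℕ) (x : ℝ), 1 ≤ j ∧ ∀ i, 0 < omega (f i) j x

/-- Two representations define the same curve in `TP^m`: pointwise they differ by a scalar. -/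
def SameCurve {m : ℕ} (f g : Fin (m + 1) → ℝ → ℝ) : Prop :=
  ∀ x : ℝ, ∃ lam : ℝ, ∀ i, f i x = g i x + lam

/-- The curve represented by `f` is non-constant. -/
def NonConstantCurve {m : ℕ} (f : Fin (m + 1) → ℝ → ℝ) : Prop :=
  ¬ ∀ x y : ℝ, ∃ lam : ℝ, ∀ i, f i x = f i y + lam

/-- The tropical Casoratian `C₀(f₀, …, f_m)(x) = max_σ Σ_i f_i(x + σ(i))`. -/
def Casoratian {m : ℕ} (f : Fin (m + 1) → ℝ → ℝ) (x : ℝ) : ℝ :=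
  ⨆ σ : Equiv.Perm (Fin (m + 1)), ∑ i, f i (x + ((σ i : ℕ) : ℝ))

end Trop

end


noncomputable section TropProofAux

namespace TropProof

open Trop Polynomial

/-! ### Uniqueness of polynomial pieces -/

lemma poly_eq_of_Ico {p q : Polynomial ℝ} {a b : ℝ} (hab : a < b)
    (h : ∀ y ∈ Set.Ico a b, p.eval y = q.eval y) : p = q := by
  have h0 : p - q = 0 := by
    apply Polynomial.eq_zero_of_infinite_isRoot
    apply (Set.Ico_infinite hab).mono
    intro y hy
    simp [Polynomial.IsRoot, h y hy]
  exact sub_eq_zero.mp h0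

lemma poly_eq_of_Ioc {p q : Polynomial ℝ} {a b : ℝ} (hab : a < b)
    (h : ∀ y ∈ Set.Ioc a b, p.eval y = q.eval y) : p = q := by
  have h0 : p - q = 0 := by
    apply Polynomial.eq_zero_of_infinite_isRoot
    apply (Set.Ioc_infinite hab).mono
    intro y hy
    simp [Polynomial.IsRoot, h y hy]
  exact sub_eq_zero.mp h0

lemma isRightPiece_unique {f : ℝ → ℝ} {a : ℝ} {p q : Polynomial ℝ}
    (hp : IsRightPiece f a p) (hq : IsRightPiece f a q) : p = q := by
  obtain ⟨ε1, hε1, h1⟩ := hp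
  obtain ⟨ε2, hε2, h2⟩ := hq
  refine poly_eq_of_Ico (a := a) (b := a + min ε1 ε2)
    (lt_add_of_pos_right a (lt_min hε1 hε2)) ?_
  intro y hy
  obtain ⟨hy1, hy2⟩ := hy
  rw [← h1 y ⟨hy1, by linarith [min_le_left ε1 ε2]⟩,
    h2 y ⟨hy1, by linarith [min_le_right ε1 ε2]⟩]

lemma isLeftPiece_unique {f : ℝ → ℝ} {a : ℝ} {p q : Polynomial ℝ}
    (hp : IsLeftPiece f a p) (hq : IsLeftPiece f a q) : p = q := by
  obtain ⟨ε1, hε1, h1⟩ := hp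
  obtain ⟨ε2, hε2, h2⟩ := hq
  refine poly_eq_of_Ioc (a := a - min ε1 ε2) (b := a)
    (by linarith [lt_min hε1 hε2]) ?_
  intro y hy
  obtain ⟨hy1, hy2⟩ := hy
  rw [← h1 y ⟨by linarith [min_le_left ε1 ε2], hy2⟩,
    h2 y ⟨by linarith [min_le_right ε1 ε2], hy2⟩]

lemma rightPoly_eq_of {f : ℝ → ℝ} {a : ℝ} {p : Polynomial ℝ} (hp : IsRightPiece f a p) :
    rightPoly f a = p := by
  have hex : ∃ q, IsRightPiece f a q := ⟨p, hp⟩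
  rw [Trop.rightPoly, dif_pos hex]
  exact isRightPiece_unique hex.choose_spec hp

lemma leftPoly_eq_of {f : ℝ → ℝ} {a : ℝ} {p : Polynomial ℝ} (hp : IsLeftPiece f a p) :
    leftPoly f a = p := by
  have hex : ∃ q, IsLeftPiece f a q := ⟨p, hp⟩
  rw [Trop.leftPoly, dif_pos hex]
  exact isLeftPiece_unique hex.choose_spec hp


/-! ### Polynomial positivity propagation -/

lemma polyB0 : ∀ (d : ℕ) (P : Polynomial ℝ), P.natDegree ≤ d → ∀ s t : ℝ, s ≤ t →
    (∀ j : ℕ, 0 ≤ ((fun q : Polynomial ℝ => derivative q)^[j] P).eval s) → 0 ≤ P.eval t := by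
  intro d
  induction d with
  | zero =>
    intro P hP s t _ h
    have hP0 : P = C (P.coeff 0) := eq_C_of_natDegree_eq_zero (Nat.le_zero.mp hP)
    have := h 0
    simp only [Function.iterate_zero, id_eq] at this
    rw [hP0] at this ⊢
    simpa using this
  | succ d ih =>
    intro P hP s t hst h
    have hd : (derivative P).natDegree ≤ d := by
      have := Polynomial.natDegree_derivative_le P
      omega
    have hderiv : ∀ u ∈ Set.Ici s, 0 ≤ (derivative P).eval u := by
      intro u hu
      refine ih (derivative P) hd s u hu ?_
      intro j
      have := h (j + 1)
      rwa [Function.iterate_succ_apply] at this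
    have hmono : MonotoneOn (fun x : ℝ => P.eval x) (Set.Ici s) := by
      apply monotoneOn_of_deriv_nonneg (convex_Ici s)
      · exact (Polynomial.continuous_aeval P).continuousOn
      · exact (Polynomial.differentiable P).differentiableOn
      · intro u hu
        rw [Polynomial.deriv]
        exact hderiv u (interior_subset hu)
    have h0 := h 0
    simp only [Function.iterate_zero, id_eq] at h0
    calc (0:ℝ) ≤ P.eval s := h0
      _ ≤ P.eval t := hmono (Set.self_mem_Ici) (Set.mem_Ici.mpr hst) hst

lemma polyB (P : Polynomial ℝ) {s t : ℝ} (hst : s ≤ t)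
    (h : ∀ j : ℕ, 0 ≤ ((fun q : Polynomial ℝ => derivative q)^[j] P).eval s) : 0 ≤ P.eval t :=
  polyB0 P.natDegree P le_rfl s t hst h

/-- Propagation of one-sided sign conditions on derivatives, plus monotonicity. -/
lemma polyProp (P : Polynomial ℝ) {s t : ℝ} (hst : s ≤ t)
    (h : ∀ j : ℕ, 1 ≤ j → 0 ≤ ((fun q : Polynomial ℝ => derivative q)^[j] P).eval s) :
    P.eval s ≤ P.eval t ∧
      ∀ j : ℕ, 1 ≤ j → 0 ≤ ((fun q : Polynomial ℝ => derivative q)^[j] P).eval t := by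
  have hall : ∀ j : ℕ, 0 ≤ ((fun q : Polynomial ℝ => derivative q)^[j] (derivative P)).eval s := by
    intro j
    have := h (j + 1) (by omega)
    rwa [Function.iterate_succ_apply] at this
  constructor
  · have hderiv : ∀ u ∈ Set.Ici s, 0 ≤ (derivative P).eval u := by
      intro u hu
      refine polyB (derivative P) hu ?_
      exact hall
    have hmono : MonotoneOn (fun x : ℝ => P.eval x) (Set.Ici s) := by
      apply monotoneOn_of_deriv_nonneg (convex_Ici s)
      · exact (Polynomial.continuous_aeval P).continuousOn
      · exact (Polynomial.differentiable P).differentiableOn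
      · intro u hu
        rw [Polynomial.deriv]
        exact hderiv u (interior_subset hu)
    exact hmono Set.self_mem_Ici (Set.mem_Ici.mpr hst) hst
  · intro j hj
    refine polyB _ hst ?_
    intro k
    rw [← Function.iterate_add_apply]
    exact h (k + j) (by omega)


/-! ### The symmetrized polynomials -/

/-- Composition with `-X`. -/
def nc (q : Polynomial ℝ) : Polynomial ℝ := q.comp (-X)

lemma nc_eval (q : Polynomial ℝ) (u : ℝ) : (nc q).eval u = q.eval (-u) := by
  simp [nc]

lemma iterate_derivative_nc (q : Polynomial ℝ) (j : ℕ) :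
    (fun q : Polynomial ℝ => derivative q)^[j] (nc q) =
      ((-1 : ℝ) ^ j) • nc ((fun q : Polynomial ℝ => derivative q)^[j] q) := by
  induction j with
  | zero => simp
  | succ j ih =>
    rw [Function.iterate_succ_apply', ih]
    simp only [Function.iterate_succ_apply']
    rw [derivative_smul, nc, Polynomial.derivative_comp]
    simp only [derivative_neg, derivative_X]
    rw [pow_succ]
    ext k
    simp [nc, mul_comm]

/-- The right piece of `x ↦ f x + f (-x)` at `t ≥ 0`. -/
def Qp (f : ℝ → ℝ) (t : ℝ) : Polynomial ℝ := rightPoly f t + nc (leftPoly f (-t))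

/-- The left piece of `x ↦ f x + f (-x)` at `t > 0`. -/
def Lp (f : ℝ → ℝ) (t : ℝ) : Polynomial ℝ := leftPoly f t + nc (rightPoly f (-t))

lemma Qp_deriv_eval (f : ℝ → ℝ) (t u : ℝ) (j : ℕ) :
    ((fun q : Polynomial ℝ => derivative q)^[j] (Qp f t)).eval u =
      ((fun q : Polynomial ℝ => derivative q)^[j] (rightPoly f t)).eval u +
        (-1 : ℝ) ^ j * ((fun q : Polynomial ℝ => derivative q)^[j] (leftPoly f (-t))).eval (-u) := by
  have hadd : ∀ (p q : Polynomial ℝ) (j : ℕ),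
      (fun q : Polynomial ℝ => derivative q)^[j] (p + q) =
        (fun q : Polynomial ℝ => derivative q)^[j] p + (fun q : Polynomial ℝ => derivative q)^[j] q := by
    intro p q j
    induction j with
    | zero => simp
    | succ j ih => simp [Function.iterate_succ_apply', ih]
  rw [Qp, hadd, iterate_derivative_nc]
  simp [nc_eval]

lemma Lp_deriv_eval (f : ℝ → ℝ) (t u : ℝ) (j : ℕ) :
    ((fun q : Polynomial ℝ => derivative q)^[j] (Lp f t)).eval u =
      ((fun q : Polynomial ℝ => derivative q)^[j] (leftPoly f t)).eval u +
        (-1 : ℝ) ^ j * ((fun q : Polynomial ℝ => derivative q)^[j] (rightPoly f (-t))).eval (-u) := by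
  have hadd : ∀ (p q : Polynomial ℝ) (j : ℕ),
      (fun q : Polynomial ℝ => derivative q)^[j] (p + q) =
        (fun q : Polynomial ℝ => derivative q)^[j] p + (fun q : Polynomial ℝ => derivative q)^[j] q := by
    intro p q j
    induction j with
    | zero => simp
    | succ j ih => simp [Function.iterate_succ_apply', ih]
  rw [Lp, hadd, iterate_derivative_nc]
  simp [nc_eval]

/-! ### Consequences of `NoPoles` -/

lemma omega_num_nonneg {f : ℝ → ℝ} (h : NoPoles f) {j : ℕ} (hj : 1 ≤ j) (z : ℝ) :
    0 ≤ sgnR z ^ (j + 1) * rderiv f j z - sgnL z ^ (j + 1) * lderiv f j z := by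
  have h1 := h j hj z
  rw [Trop.omega] at h1
  have hfac : (0:ℝ) < (Nat.factorial j : ℝ) := by positivity
  have := mul_nonneg h1 hfac.le
  rwa [div_mul_cancel₀] at this
  exact hfac.ne'

lemma jump_at_zero {f : ℝ → ℝ} (h : NoPoles f) {j : ℕ} (hj : 1 ≤ j) :
    0 ≤ ((fun q : Polynomial ℝ => derivative q)^[j] (Qp f 0)).eval 0 := by
  have h1 := omega_num_nonneg h hj 0
  rw [Trop.sgnR, Trop.sgnL, Trop.rderiv, Trop.lderiv] at h1
  simp only [lt_irrefl, lt_self_iff_false, if_false, ite_false, one_pow] at h1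
  rw [Qp_deriv_eval]
  simp only [neg_zero]
  rw [pow_succ] at h1
  linarith [h1]

lemma jump_at_pos {f : ℝ → ℝ} (h : NoPoles f) {j : ℕ} (hj : 1 ≤ j) {t : ℝ} (ht : 0 < t) :
    ((fun q : Polynomial ℝ => derivative q)^[j] (Lp f t)).eval t ≤
      ((fun q : Polynomial ℝ => derivative q)^[j] (Qp f t)).eval t := by
  have h1 := omega_num_nonneg h hj t
  have h2 := omega_num_nonneg h hj (-t)
  rw [Trop.sgnR, Trop.sgnL] at h1 h2
  simp only [not_lt_of_gt ht, if_false, if_pos ht, one_pow] at h1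
  have hnt : -t < 0 := by linarith
  simp only [if_pos hnt, if_neg (by linarith : ¬ (0:ℝ) < -t)] at h2
  rw [Trop.rderiv, Trop.lderiv] at h1 h2
  rw [Qp_deriv_eval, Lp_deriv_eval]
  rw [pow_succ] at h2
  linarith [h1, h2]

/-! ### Agreement of `Qp`/`Lp` with the symmetrized function -/

lemma rightPoly_spec {f : ℝ → ℝ} (hR : ∀ a, ∃ p, IsRightPiece f a p) (a : ℝ) :
    IsRightPiece f a (rightPoly f a) := by
  obtain ⟨p, hp⟩ := hR a
  rw [rightPoly_eq_of hp]
  exact hp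

lemma leftPoly_spec {f : ℝ → ℝ} (hL : ∀ a, ∃ p, IsLeftPiece f a p) (a : ℝ) :
    IsLeftPiece f a (leftPoly f a) := by
  obtain ⟨p, hp⟩ := hL a
  rw [leftPoly_eq_of hp]
  exact hp

lemma Qp_agree {f : ℝ → ℝ} (hR : ∀ a, ∃ p, IsRightPiece f a p)
    (hL : ∀ a, ∃ p, IsLeftPiece f a p) (t : ℝ) :
    ∃ ε > (0:ℝ), ∀ s, t ≤ s → s < t + ε →
      f s + f (-s) = (Qp f t).eval s ∧ Qp f s = Qp f t := by
  obtain ⟨ε1, hε1, h1⟩ := rightPoly_spec hR t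
  obtain ⟨ε2, hε2, h2⟩ := leftPoly_spec hL (-t)
  refine ⟨min ε1 ε2, lt_min hε1 hε2, ?_⟩
  intro s hs1 hs2
  have hm1 := min_le_left ε1 ε2
  have hm2 := min_le_right ε1 ε2
  have hfs : f s = (rightPoly f t).eval s := h1 s ⟨hs1, by linarith⟩
  have hfns : f (-s) = (leftPoly f (-t)).eval (-s) := h2 (-s) ⟨by linarith, by linarith⟩
  constructor
  · simp [Qp, nc_eval, hfs, hfns]
  · have hrs : rightPoly f s = rightPoly f t := by
      apply rightPoly_eq_of
      refine ⟨t + ε1 - s, by linarith, ?_⟩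
      intro y hy
      obtain ⟨hy1, hy2⟩ := hy
      exact h1 y ⟨by linarith, by linarith⟩
    have hls : leftPoly f (-s) = leftPoly f (-t) := by
      apply leftPoly_eq_of
      refine ⟨t + ε2 - s, by linarith, ?_⟩
      intro y hy
      obtain ⟨hy1, hy2⟩ := hy
      exact h2 y ⟨by linarith, by linarith⟩
    rw [Qp, Qp, hrs, hls]

lemma Lp_agree {f : ℝ → ℝ} (hR : ∀ a, ∃ p, IsRightPiece f a p)
    (hL : ∀ a, ∃ p, IsLeftPiece f a p) (t : ℝ) :
    ∃ ε > (0:ℝ), ∀ s, t - ε < s → s < t →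
      f s + f (-s) = (Lp f t).eval s ∧ Qp f s = Lp f t := by
  obtain ⟨ε1, hε1, h1⟩ := leftPoly_spec hL t
  obtain ⟨ε2, hε2, h2⟩ := rightPoly_spec hR (-t)
  refine ⟨min ε1 ε2, lt_min hε1 hε2, ?_⟩
  intro s hs1 hs2
  have hm1 := min_le_left ε1 ε2
  have hm2 := min_le_right ε1 ε2
  have hfs : f s = (leftPoly f t).eval s := h1 s ⟨by linarith, by linarith⟩
  have hfns : f (-s) = (rightPoly f (-t)).eval (-s) := h2 (-s) ⟨by linarith, by linarith⟩
  constructor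
  · simp [Lp, nc_eval, hfs, hfns]
  · have hrs : rightPoly f s = leftPoly f t := by
      apply rightPoly_eq_of
      refine ⟨t - s, by linarith, ?_⟩
      intro y hy
      obtain ⟨hy1, hy2⟩ := hy
      exact h1 y ⟨by linarith, by linarith⟩
    have hls : leftPoly f (-s) = rightPoly f (-t) := by
      apply leftPoly_eq_of
      refine ⟨t - s, by linarith, ?_⟩
      intro y hy
      obtain ⟨hy1, hy2⟩ := hy
      exact h2 y ⟨by linarith, by linarith⟩
    rw [Qp, Lp, hrs, hls]

lemma Qp_eval_self {f : ℝ → ℝ} (hR : ∀ a, ∃ p, IsRightPiece f a p)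
    (hL : ∀ a, ∃ p, IsLeftPiece f a p) (t : ℝ) : (Qp f t).eval t = f t + f (-t) := by
  obtain ⟨ε, hε, h⟩ := Qp_agree hR hL t
  exact ((h t le_rfl (by linarith)).1).symm

lemma Lp_eval_self {f : ℝ → ℝ} (hR : ∀ a, ∃ p, IsRightPiece f a p)
    (hL : ∀ a, ∃ p, IsLeftPiece f a p) (t : ℝ) : (Lp f t).eval t = f t + f (-t) := by
  obtain ⟨ε1, hε1, h1⟩ := leftPoly_spec hL t
  obtain ⟨ε2, hε2, h2⟩ := rightPoly_spec hR (-t)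
  have hfs : f t = (leftPoly f t).eval t := h1 t ⟨by linarith, le_rfl⟩
  have hfns : f (-t) = (rightPoly f (-t)).eval (-t) := h2 (-t) ⟨le_rfl, by linarith⟩
  simp [Lp, nc_eval, hfs, hfns]

/-! ### Main monotonicity lemma -/

lemma main {f : ℝ → ℝ} (hR : ∀ a, ∃ p, IsRightPiece f a p)
    (hL : ∀ a, ∃ p, IsLeftPiece f a p) (hnp : NoPoles f) :
    ∀ r : ℝ, 0 ≤ r → f 0 + f 0 ≤ f r + f (-r) := by
  set S : Set ℝ := {t | 0 ≤ t ∧ f 0 + f 0 ≤ f t + f (-t) ∧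
    ∀ j : ℕ, 1 ≤ j → 0 ≤ ((fun q : Polynomial ℝ => derivative q)^[j] (Qp f t)).eval t} with hS
  have h0S : (0:ℝ) ∈ S :=
    ⟨le_rfl, by rw [neg_zero], fun j hj => jump_at_zero hnp hj⟩
  have hright : ∀ t ∈ S, ∃ ε > (0:ℝ), ∀ s, t ≤ s → s < t + ε → s ∈ S := by
    intro t htS
    obtain ⟨ht0, htG, htD⟩ := htS
    obtain ⟨ε, hε, hag⟩ := Qp_agree hR hL t
    refine ⟨ε, hε, ?_⟩
    intro s hs1 hs2
    obtain ⟨hval, hQ⟩ := hag s hs1 hs2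
    have hprop := polyProp (Qp f t) hs1 (fun j hj => htD j hj)
    have hQt : (Qp f t).eval t = f t + f (-t) := Qp_eval_self hR hL t
    refine ⟨le_trans ht0 hs1, ?_, ?_⟩
    · rw [hval]
      calc f 0 + f 0 ≤ f t + f (-t) := htG
        _ = (Qp f t).eval t := hQt.symm
        _ ≤ (Qp f t).eval s := hprop.1
    · intro j hj
      rw [hQ]
      exact hprop.2 j hj
  have hleft : ∀ t : ℝ, 0 < t → ∃ ε > (0:ℝ), ∀ s, t - ε < s → s < t → s ∈ S → t ∈ S := by
    intro t ht
    obtain ⟨ε, hε, hag⟩ := Lp_agree hR hL t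
    refine ⟨ε, hε, ?_⟩
    intro s hs1 hs2 hsS
    obtain ⟨hs0, hsG, hsD⟩ := hsS
    obtain ⟨hval, hQ⟩ := hag s hs1 hs2
    have hDs : ∀ j, 1 ≤ j →
        0 ≤ ((fun q : Polynomial ℝ => derivative q)^[j] (Lp f t)).eval s := by
      intro j hj
      rw [← hQ]
      exact hsD j hj
    have hprop := polyProp (Lp f t) hs2.le hDs
    refine ⟨ht.le, ?_, ?_⟩
    · calc f 0 + f 0 ≤ f s + f (-s) := hsG
        _ = (Lp f t).eval s := hval
        _ ≤ (Lp f t).eval t := hprop.1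
        _ = f t + f (-t) := Lp_eval_self hR hL t
    · intro j hj
      exact le_trans (hprop.2 j hj) (jump_at_pos hnp hj ht)
  intro r hr
  rcases eq_or_lt_of_le hr with h|h
  · rw [← h, neg_zero]
  have hT : ∀ x ∈ S ∩ Set.Icc 0 r, x ≤ r := fun x hx => hx.2.2
  have hTne : (S ∩ Set.Icc 0 r).Nonempty := ⟨0, h0S, le_rfl, hr⟩
  have hTbdd : BddAbove (S ∩ Set.Icc 0 r) := ⟨r, fun x hx => hx.2.2⟩
  set c := sSup (S ∩ Set.Icc 0 r) with hc
  have hcr : c ≤ r := csSup_le hTne hT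
  have hc0 : 0 ≤ c := le_csSup hTbdd ⟨h0S, le_rfl, hr⟩
  have hcub : ∀ x ∈ S ∩ Set.Icc 0 r, x ≤ c := fun x hx => le_csSup hTbdd hx
  have hcS : c ∈ S := by
    rcases eq_or_lt_of_le hc0 with h0|h0
    · rw [← h0]
      exact h0S
    · obtain ⟨ε, hε, hcl⟩ := hleft c h0
      have hδ : c - min ε c < c := by
        have := lt_min hε h0
        linarith [this]
      obtain ⟨s, hsT, hs⟩ := exists_lt_of_lt_csSup hTne hδ
      have hsc : s ≤ c := hcub s hsT
      rcases eq_or_lt_of_le hsc with heq|hlt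
      · rw [← heq]
        exact hsT.1
      · refine hcl s ?_ hlt hsT.1
        have := min_le_left ε c
        linarith
  have hcr' : c = r := by
    by_contra hne
    have hclt : c < r := lt_of_le_of_ne hcr hne
    obtain ⟨ε, hε, hext⟩ := hright c hcS
    set s := min (c + ε / 2) r with hs
    have hsc : c < s := lt_min (by linarith) hclt
    have hsS : s ∈ S := hext s hsc.le (by
      have := min_le_left (c + ε/2) r
      linarith)
    have hsr : s ≤ r := min_le_right _ _
    have : s ≤ c := hcub s ⟨hsS, le_trans hc0 hsc.le, hsr⟩
    linarith
  have := hcS.2.1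
  rwa [hcr'] at this

/-! ### Existence of pieces for piecewise polynomial functions -/

lemma pieces_exist {n : ℕ} {f : ℝ → ℝ} (h : IsNthPiecewisePoly n f) :
    (∀ a, ∃ p, IsRightPiece f a p) ∧ ∀ a, ∃ p, IsLeftPiece f a p := by
  obtain ⟨-, x, p, hmono, htop, hbot, hagree, -, -⟩ := h
  have key : ∀ a : ℝ, ∃ i : ℤ, x (i - 1) < a ∧ a ≤ x i := by
    intro a
    have hub : ∃ i : ℤ, a ≤ x i := by
      obtain ⟨i, hi⟩ := (htop.eventually (Filter.eventually_ge_atTop a)).exists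
      exact ⟨i, hi⟩
    have hlb : ∃ j : ℤ, x j < a := by
      obtain ⟨j, hj⟩ := (hbot.eventually (Filter.eventually_lt_atBot a)).exists
      exact ⟨j, hj⟩
    obtain ⟨j, hj⟩ := hlb
    have hbdd : ∃ b : ℤ, ∀ z : ℤ, a ≤ x z → b ≤ z := by
      refine ⟨j, fun z hz => ?_⟩
      by_contra hzj
      push_neg at hzj
      exact absurd (hmono hzj) (by linarith)
    obtain ⟨i, hi, hmin⟩ := Int.exists_least_of_bdd hbdd hub
    refine ⟨i, ?_, hi⟩
    by_contra hxa
    push_neg at hxa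
    have := hmin (i - 1) hxa
    omega
  constructor
  · intro a
    obtain ⟨i, hi1, hi2⟩ := key a
    rcases eq_or_lt_of_le hi2 with heq|hlt
    · refine ⟨p (i + 1), ⟨x (i + 1) - x i, by
        have := hmono (show i < i + 1 by omega); linarith, ?_⟩⟩
      intro y hy
      obtain ⟨hy1, hy2⟩ := hy
      refine hagree (i + 1) y ⟨?_, ?_⟩
      · simp only [add_sub_cancel_right]
        linarith
      · linarith
    · refine ⟨p i, ⟨x i - a, by linarith, ?_⟩⟩
      intro y hy
      obtain ⟨hy1, hy2⟩ := hy
      exact hagree i y ⟨by linarith, by linarith⟩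
  · intro a
    obtain ⟨i, hi1, hi2⟩ := key a
    refine ⟨p i, ⟨a - x (i - 1), by linarith, ?_⟩⟩
    intro y hy
    obtain ⟨hy1, hy2⟩ := hy
    exact hagree i y ⟨by linarith, by linarith⟩

/-! ### Negation -/

lemma isRightPiece_neg {f : ℝ → ℝ} {a : ℝ} {p : Polynomial ℝ} (h : IsRightPiece f a p) :
    IsRightPiece (fun x => -f x) a (-p) := by
  obtain ⟨ε, hε, hp⟩ := h
  exact ⟨ε, hε, fun y hy => by simp [hp y hy]⟩

lemma isLeftPiece_neg {f : ℝ → ℝ} {a : ℝ} {p : Polynomial ℝ} (h : IsLeftPiece f a p) :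
    IsLeftPiece (fun x => -f x) a (-p) := by
  obtain ⟨ε, hε, hp⟩ := h
  exact ⟨ε, hε, fun y hy => by simp [hp y hy]⟩

lemma omega_neg {f : ℝ → ℝ} (hR : ∀ a, ∃ p, IsRightPiece f a p)
    (hL : ∀ a, ∃ p, IsLeftPiece f a p) (j : ℕ) (a : ℝ) :
    omega (fun x => -f x) j a = -omega f j a := by
  have h1 : rightPoly (fun x => -f x) a = -rightPoly f a :=
    rightPoly_eq_of (isRightPiece_neg (rightPoly_spec hR a))
  have h2 : leftPoly (fun x => -f x) a = -leftPoly f a :=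
    leftPoly_eq_of (isLeftPiece_neg (leftPoly_spec hL a))
  have hit : ∀ (q : Polynomial ℝ) (j : ℕ),
      (fun q : Polynomial ℝ => derivative q)^[j] (-q) =
        -((fun q : Polynomial ℝ => derivative q)^[j] q) := by
    intro q j
    induction j with
    | zero => simp
    | succ j ih => simp [Function.iterate_succ_apply', ih]
  rw [Trop.omega, Trop.omega, Trop.rderiv, Trop.rderiv, Trop.lderiv, Trop.lderiv, h1, h2,
    hit, hit]
  simp [neg_div]
  ring

end TropProof

end TropProofAux

/-- For every `n`-th tropical entire function `f` and every `r > 0`,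
`(f(r) + f(−r))/2 ≥ f(0)`, with equality for all `r > 0` when `f` is moreover
nowhere vanishing entire. -/
theorem statement0 (n : ℕ) (hn : 1 ≤ n) (f : ℝ → ℝ)
    (hmero : Trop.IsTropicalMeromorphic n f) (hent : Trop.NoPoles f) :
    (∀ r : ℝ, 0 < r → f 0 ≤ (f r + f (-r)) / 2) ∧
    (Trop.NoRoots f → ∀ r : ℝ, 0 < r → (f r + f (-r)) / 2 = f 0) := by
  obtain ⟨hpw, -⟩ := hmero
  obtain ⟨hR, hL⟩ := TropProof.pieces_exist hpw
  have h1 : ∀ r : ℝ, 0 < r → f 0 ≤ (f r + f (-r)) / 2 := by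
    intro r hr
    have := TropProof.main hR hL hent r hr.le
    linarith
  refine ⟨h1, ?_⟩
  intro hroots r hr
  have hRn : ∀ a, ∃ p, Trop.IsRightPiece (fun x => -f x) a p :=
    fun a => ⟨-(Trop.rightPoly f a), TropProof.isRightPiece_neg (TropProof.rightPoly_spec hR a)⟩
  have hLn : ∀ a, ∃ p, Trop.IsLeftPiece (fun x => -f x) a p :=
    fun a => ⟨-(Trop.leftPoly f a), TropProof.isLeftPiece_neg (TropProof.leftPoly_spec hL a)⟩
  have hnp : Trop.NoPoles (fun x => -f x) := by
    intro j hj z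
    rw [TropProof.omega_neg hR hL j z]
    have := hroots j hj z
    linarith
  have h2 := TropProof.main hRn hLn hnp r hr.le
  have h3 := TropProof.main hR hL hent r hr.le
  linarith
end

section
/- Let n ≥ 1 be an integer. For any n-th tropical meromorphic function f there exist an n₁-th tropical entire function g and an n₂-th tropical entire function h, with max{n₁, n₂} = n, such that f = h − g on ℝ and, for every j ∈ {1,…,n}, no point of ℝ is simultaneously a j-th root of both h and g (nor a j-th pole of either, since both are entire). -/
open Filter MeasureTheory Asymptotics Polynomial
open scoped Classical

noncomputable section
namespace S1
open Trop Polynomial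

lemma sgnR_mul_self (x : ℝ) : sgnR x * sgnR x = 1 := by
  unfold sgnR; split <;> norm_num

lemma sgnR_pow_sq (x : ℝ) (m : ℕ) : sgnR x ^ m * sgnR x ^ m = 1 := by
  rw [← mul_pow, sgnR_mul_self, one_pow]

lemma sgnR_zero : sgnR 0 = 1 := by unfold sgnR; norm_num

lemma sgnL_zero : sgnL 0 = -1 := by unfold sgnL; norm_num

lemma sgnL_eq_sgnR {x : ℝ} (hx : x ≠ 0) : sgnL x = sgnR x := by
  unfold sgnL sgnR
  rcases hx.lt_or_gt with h | h
  · rw [if_neg (by linarith), if_pos h]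
  · rw [if_pos h, if_neg (by linarith)]

lemma rightPoly_eq {f : ℝ → ℝ} {x : ℝ} {p : Polynomial ℝ} (hp : IsRightPiece f x p) :
    rightPoly f x = p := by
  have hex : ∃ q, IsRightPiece f x q := ⟨p, hp⟩
  rw [rightPoly, dif_pos hex]
  obtain ⟨ε1, hε1, h1⟩ := hex.choose_spec
  obtain ⟨ε2, hε2, h2⟩ := hp
  apply Polynomial.eq_of_infinite_eval_eq
  have hlt : x < x + min ε1 ε2 := by
    have := lt_min hε1 hε2; linarith
  have hsub : Set.Ico x (x + min ε1 ε2) ⊆ {y | eval y hex.choose = eval y p} := by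
    intro y hy
    have hy1 : y ∈ Set.Ico x (x + ε1) := ⟨hy.1, lt_of_lt_of_le hy.2 (by have := min_le_left ε1 ε2; linarith)⟩
    have hy2 : y ∈ Set.Ico x (x + ε2) := ⟨hy.1, lt_of_lt_of_le hy.2 (by have := min_le_right ε1 ε2; linarith)⟩
    simp only [Set.mem_setOf_eq]
    rw [← h1 y hy1, ← h2 y hy2]
  exact Set.Infinite.mono hsub (Set.infinite_coe_iff.mp (Set.Ico.infinite hlt))

lemma leftPoly_eq {f : ℝ → ℝ} {x : ℝ} {p : Polynomial ℝ} (hp : IsLeftPiece f x p) :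
    leftPoly f x = p := by
  have hex : ∃ q, IsLeftPiece f x q := ⟨p, hp⟩
  rw [leftPoly, dif_pos hex]
  obtain ⟨ε1, hε1, h1⟩ := hex.choose_spec
  obtain ⟨ε2, hε2, h2⟩ := hp
  apply Polynomial.eq_of_infinite_eval_eq
  have hlt : x - min ε1 ε2 < x := by
    have := lt_min hε1 hε2; linarith
  have hsub : Set.Ioc (x - min ε1 ε2) x ⊆ {y | eval y hex.choose = eval y p} := by
    intro y hy
    have hy1 : y ∈ Set.Ioc (x - ε1) x := ⟨lt_of_le_of_lt (by have := min_le_left ε1 ε2; linarith) hy.1, hy.2⟩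
    have hy2 : y ∈ Set.Ioc (x - ε2) x := ⟨lt_of_le_of_lt (by have := min_le_right ε1 ε2; linarith) hy.1, hy.2⟩
    simp only [Set.mem_setOf_eq]
    rw [← h1 y hy1, ← h2 y hy2]
  exact Set.Infinite.mono hsub (Set.infinite_coe_iff.mp (Set.Ioc.infinite hlt))

lemma deriv_iter_eval (P : Polynomial ℝ) (j : ℕ) (x : ℝ) :
    ((fun q : Polynomial ℝ => Polynomial.derivative q)^[j] P).eval x
      = (j.factorial : ℝ) * ((taylor x) P).coeff j := by
  have h := congrFun (Polynomial.factorial_smul_hasseDeriv (R := ℝ) j) P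
  have h2 : (⇑Polynomial.derivative)^[j] P = (j.factorial : ℕ) • (Polynomial.hasseDeriv j P) := by
    rw [← h]; simp
  show ((⇑Polynomial.derivative)^[j] P).eval x = _
  rw [h2, taylor_coeff]
  simp [nsmul_eq_mul]

lemma omega_eval (f : ℝ → ℝ) (j : ℕ) (x : ℝ) :
    omega f j x = sgnR x ^ (j+1) * ((taylor x) (rightPoly f x)).coeff j
      - sgnL x ^ (j+1) * ((taylor x) (leftPoly f x)).coeff j := by
  have hfac : (j.factorial : ℝ) ≠ 0 := Nat.cast_ne_zero.mpr (Nat.factorial_ne_zero j)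
  rw [omega, rderiv, lderiv, deriv_iter_eval, deriv_iter_eval]
  field_simp

section Pieces

variable {x : ℤ → ℝ} {F : ℝ → ℝ} {P : ℤ → Polynomial ℝ}

lemma isRightPiece_of (hF : ∀ i : ℤ, ∀ y ∈ Set.Icc (x (i-1)) (x i), F y = (P i).eval y)
    {i : ℤ} {y : ℝ} (h1 : x (i-1) ≤ y) (h2 : y < x i) : IsRightPiece F y (P i) :=
  ⟨x i - y, by linarith, fun z hz => hF i z ⟨le_trans h1 hz.1, by have := hz.2; linarith⟩⟩

lemma isLeftPiece_of (hF : ∀ i : ℤ, ∀ y ∈ Set.Icc (x (i-1)) (x i), F y = (P i).eval y)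
    {i : ℤ} {y : ℝ} (h1 : x (i-1) < y) (h2 : y ≤ x i) : IsLeftPiece F y (P i) :=
  ⟨y - x (i-1), by linarith, fun z hz => hF i z ⟨by have := hz.1; linarith, le_trans hz.2 h2⟩⟩

lemma omega_break (hx : StrictMono x)
    (hF : ∀ i : ℤ, ∀ y ∈ Set.Icc (x (i-1)) (x i), F y = (P i).eval y) (k : ℤ) (j : ℕ) :
    omega F j (x k) = sgnR (x k) ^ (j+1) * ((taylor (x k)) (P (k+1))).coeff j
      - sgnL (x k) ^ (j+1) * ((taylor (x k)) (P k)).coeff j := by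
  have hr : rightPoly F (x k) = P (k+1) :=
    rightPoly_eq (isRightPiece_of hF (by rw [show k+1-1 = k by ring]) (hx (by omega)))
  have hl : leftPoly F (x k) = P k :=
    leftPoly_eq (isLeftPiece_of hF (hx (by omega)) le_rfl)
  rw [omega_eval, hr, hl]

lemma omega_interior (hF : ∀ i : ℤ, ∀ y ∈ Set.Icc (x (i-1)) (x i), F y = (P i).eval y)
    {i : ℤ} {y : ℝ} (h1 : x (i-1) < y) (h2 : y < x i) (j : ℕ) :
    omega F j y = (sgnR y ^ (j+1) - sgnL y ^ (j+1)) * ((taylor y) (P i)).coeff j := by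
  rw [omega_eval, rightPoly_eq (isRightPiece_of hF h1.le h2),
    leftPoly_eq (isLeftPiece_of hF h1 h2.le)]
  ring

lemma exists_piece_index (ht : Tendsto x atTop atTop) (hb : Tendsto x atBot atBot)
    (y : ℝ) : ∃ i : ℤ, x (i-1) ≤ y ∧ y < x i := by
  obtain ⟨N, hN⟩ := Filter.eventually_atTop.mp (ht.eventually_gt_atTop y)
  obtain ⟨M, hM⟩ := Filter.eventually_atBot.mp (hb.eventually_lt_atBot y)
  have hbdd : ∃ b : ℤ, ∀ z : ℤ, y < x z → b ≤ z := by
    refine ⟨M + 1, fun z hz => ?_⟩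
    by_contra h
    push_neg at h
    exact absurd (hM z (by omega)) (by linarith)
  obtain ⟨lb, hlb, hmin⟩ := Int.exists_least_of_bdd hbdd ⟨N, hN N le_rfl⟩
  refine ⟨lb, ?_, hlb⟩
  by_contra h
  push_neg at h
  have := hmin (lb - 1) h
  omega

lemma index_unique (hx : StrictMono x) {y : ℝ} {i j : ℤ}
    (hi1 : x (i-1) ≤ y) (hi2 : y < x i) (hj1 : x (j-1) ≤ y) (hj2 : y < x j) : i = j := by
  by_contra h
  rcases lt_or_gt_of_ne h with hlt | hlt
  · have : x i ≤ x (j-1) := hx.monotone (by omega)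
    linarith
  · have : x j ≤ x (i-1) := hx.monotone (by omega)
    linarith

lemma continuous_of_pieces (hx : StrictMono x)
    (hex : ∀ y : ℝ, ∃ i : ℤ, x (i-1) ≤ y ∧ y < x i)
    (hF : ∀ i : ℤ, ∀ y ∈ Set.Icc (x (i-1)) (x i), F y = (P i).eval y) :
    Continuous F := by
  rw [continuous_iff_continuousAt]
  intro y
  obtain ⟨i, h1, h2⟩ := hex y
  rcases eq_or_lt_of_le h1 with h0 | h0
  · -- y = x (i-1) is a breakpoint
    have hyk : x (i-1) = y := h0
    have hy_in : y ∈ Set.Icc (x (i-1-1)) (x (i-1)) :=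
      ⟨le_trans (hx.monotone (show i-1-1 ≤ i-1 by omega)) (le_of_eq hyk), le_of_eq hyk.symm⟩
    have hleft : ContinuousWithinAt F (Set.Iic y) y := by
      have hmem : Set.Ioc (x (i-1-1)) y ∈ nhdsWithin y (Set.Iic y) := by
        rw [← Set.Ioi_inter_Iic]
        exact Filter.inter_mem
          (mem_nhdsWithin_of_mem_nhds (Ioi_mem_nhds (by rw [← hyk]; exact hx (by omega))))
          self_mem_nhdsWithin
      have hev : F =ᶠ[nhdsWithin y (Set.Iic y)] fun z => (P (i-1)).eval z :=
        Filter.eventually_of_mem hmem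
          (fun z hz => hF (i-1) z ⟨hz.1.le, le_trans hz.2 (le_of_eq hyk.symm)⟩)
      exact ((Polynomial.continuous (P (i-1))).continuousAt.continuousWithinAt).congr_of_eventuallyEq
        hev (hF (i-1) y hy_in)
    have hright : ContinuousWithinAt F (Set.Ici y) y := by
      have hmem : Set.Ico y (x i) ∈ nhdsWithin y (Set.Ici y) := by
        rw [← Set.Ici_inter_Iio]
        exact Filter.inter_mem self_mem_nhdsWithin
          (mem_nhdsWithin_of_mem_nhds (Iio_mem_nhds h2))
      have hev : F =ᶠ[nhdsWithin y (Set.Ici y)] fun z => (P i).eval z :=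
        Filter.eventually_of_mem hmem
          (fun z hz => hF i z ⟨le_trans (le_of_eq hyk) hz.1, hz.2.le⟩)
      exact ((Polynomial.continuous (P i)).continuousAt.continuousWithinAt).congr_of_eventuallyEq
        hev (hF i y ⟨le_of_eq hyk, h2.le⟩)
    have := hleft.union hright
    rwa [Set.Iic_union_Ici, continuousWithinAt_univ] at this
  · have hmem : Set.Ioo (x (i-1)) (x i) ∈ nhds y := Ioo_mem_nhds h0 h2
    have hev : F =ᶠ[nhds y] fun z => (P i).eval z :=
      Filter.eventually_of_mem hmem (fun z hz => hF i z ⟨hz.1.le, hz.2.le⟩)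
    exact (Polynomial.continuous (P i)).continuousAt.congr hev.symm

end Pieces

section Corrector

variable (n : ℕ) (f : ℝ → ℝ)

/-- base polynomial fixing the even-order conditions at the origin -/
def BP : Polynomial ℝ :=
  ∑ j ∈ Finset.Icc 1 n, if Even j then C (max 0 (-(omega f j 0)) / 2) * X ^ j else 0

/-- jump polynomial at a corner point `c` -/
def EP (c : ℝ) : Polynomial ℝ :=
  ∑ j ∈ Finset.Icc 1 n, if c = 0 ∧ Even j then 0 else
    C (sgnR c ^ (j+1) * max 0 (-(omega f j c))) * (X - C c) ^ j

lemma BP_coeff (j : ℕ) : (BP n f).coeff j =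
    if 1 ≤ j ∧ j ≤ n ∧ Even j then max 0 (-(omega f j 0)) / 2 else 0 := by
  rw [BP, Polynomial.finset_sum_coeff]
  have hterm : ∀ m ∈ Finset.Icc 1 n,
      ((if Even m then C (max 0 (-(omega f m 0)) / 2) * X ^ m else 0) : Polynomial ℝ).coeff j
        = if m = j then (if Even m then max 0 (-(omega f m 0)) / 2 else 0) else 0 := by
    intro m _
    by_cases hm : Even m
    · rw [if_pos hm, Polynomial.coeff_C_mul, Polynomial.coeff_X_pow]
      by_cases hmj : m = j
      · subst hmj; simp [hm]
      · simp [hmj, Ne.symm hmj]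
    · rw [if_neg hm]
      simp [hm]
  rw [Finset.sum_congr rfl hterm, Finset.sum_ite_eq' (Finset.Icc 1 n) j]
  by_cases hj : j ∈ Finset.Icc 1 n
  · simp only [Finset.mem_Icc] at hj
    rw [if_pos (by simpa [Finset.mem_Icc] using hj)]
    by_cases hev : Even j
    · rw [if_pos hev, if_pos ⟨hj.1, hj.2, hev⟩]
    · rw [if_neg hev, if_neg (by tauto)]
  · rw [if_neg hj]
    simp only [Finset.mem_Icc] at hj
    rw [if_neg (by tauto)]

lemma taylor_EP (c : ℝ) (j : ℕ) : ((taylor c) (EP n f c)).coeff j =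
    if 1 ≤ j ∧ j ≤ n then
      (if c = 0 ∧ Even j then 0 else sgnR c ^ (j+1) * max 0 (-(omega f j c)))
    else 0 := by
  rw [EP, map_sum, Polynomial.finset_sum_coeff]
  have hterm : ∀ m ∈ Finset.Icc 1 n,
      ((taylor c) (if c = 0 ∧ Even m then 0 else
        C (sgnR c ^ (m+1) * max 0 (-(omega f m c))) * (X - C c) ^ m)).coeff j
        = if m = j then (if c = 0 ∧ Even m then 0 else sgnR c ^ (m+1) * max 0 (-(omega f m c))) else 0 := by
    intro m _
    by_cases hm : c = 0 ∧ Even m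
    · rw [if_pos hm, if_pos hm]
      simp
    · rw [if_neg hm, if_neg hm]
      have htay : (taylor c) (C (sgnR c ^ (m+1) * max 0 (-(omega f m c))) * (X - C c) ^ m)
          = C (sgnR c ^ (m+1) * max 0 (-(omega f m c))) * X ^ m := by
        rw [taylor_apply]
        simp [Polynomial.mul_comp, Polynomial.sub_comp, Polynomial.pow_comp]
      rw [htay, Polynomial.coeff_C_mul, Polynomial.coeff_X_pow]
      by_cases hmj : m = j
      · simp [hmj]
      · simp [Ne.symm hmj, hmj]
  rw [Finset.sum_congr rfl hterm, Finset.sum_ite_eq' (Finset.Icc 1 n) j]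
  by_cases hj : j ∈ Finset.Icc 1 n
  · rw [if_pos hj]
    simp only [Finset.mem_Icc] at hj
    rw [if_pos hj]
  · rw [if_neg hj]
    simp only [Finset.mem_Icc] at hj
    rw [if_neg (by tauto)]

lemma EP_coeff_zero (j : ℕ) : (EP n f 0).coeff j =
    if 1 ≤ j ∧ j ≤ n then
      (if Even j then 0 else max 0 (-(omega f j 0)))
    else 0 := by
  have := taylor_EP n f 0 j
  rw [taylor_zero] at this
  rw [this]
  rcases Nat.even_or_odd j with he | ho
  · simp [he]
  · simp [Nat.not_even_iff_odd.mpr ho, sgnR_zero]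

lemma EP_eval_self (c : ℝ) : (EP n f c).eval c = 0 := by
  rw [EP, Polynomial.eval_finset_sum]
  apply Finset.sum_eq_zero
  intro m hm
  simp only [Finset.mem_Icc] at hm
  by_cases h : c = 0 ∧ Even m
  · rw [if_pos h]; simp
  · rw [if_neg h]
    simp [zero_pow (show m ≠ 0 by omega)]

lemma BP_natDegree : (BP n f).natDegree ≤ n := by
  rw [Polynomial.natDegree_le_iff_coeff_eq_zero]
  intro N hN
  rw [BP_coeff]
  rw [if_neg (by omega)]

lemma EP_natDegree (c : ℝ) : (EP n f c).natDegree ≤ n := by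
  have h : ((taylor c) (EP n f c)).natDegree ≤ n := by
    rw [Polynomial.natDegree_le_iff_coeff_eq_zero]
    intro N hN
    rw [taylor_EP]
    rw [if_neg (by omega)]
  rwa [Polynomial.natDegree_taylor] at h

variable (x : ℤ → ℝ) (ib : ℤ)

/-- the pieces of the corrector function `g` -/
def QP (i : ℤ) : Polynomial ℝ :=
  BP n f + ∑ k ∈ Finset.Ico ib i, EP n f (x k) - ∑ k ∈ Finset.Ico i ib, EP n f (x k)

lemma QP_base : QP n f x ib ib = BP n f := by simp [QP]

lemma QP_succ (i : ℤ) : QP n f x ib (i+1) = QP n f x ib i + EP n f (x i) := by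
  rcases le_or_gt ib i with h | h
  · have h1 : Finset.Ico ib (i+1) = insert i (Finset.Ico ib i) := by
      ext m; simp only [Finset.mem_Ico, Finset.mem_insert]; omega
    have h2 : Finset.Ico (i+1) ib = (∅ : Finset ℤ) := by
      ext m; simp only [Finset.mem_Ico, Finset.notMem_empty, iff_false]; omega
    have h3 : Finset.Ico i ib = (∅ : Finset ℤ) := by
      ext m; simp only [Finset.mem_Ico, Finset.notMem_empty, iff_false]; omega
    rw [QP, QP, h1, h2, h3, Finset.sum_insert (by simp)]
    simp only [Finset.sum_empty]
    ring
  · have h1 : Finset.Ico ib (i+1) = (∅ : Finset ℤ) := by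
      ext m; simp only [Finset.mem_Ico, Finset.notMem_empty, iff_false]; omega
    have h2 : Finset.Ico ib i = (∅ : Finset ℤ) := by
      ext m; simp only [Finset.mem_Ico, Finset.notMem_empty, iff_false]; omega
    have h3 : Finset.Ico i ib = insert i (Finset.Ico (i+1) ib) := by
      ext m; simp only [Finset.mem_Ico, Finset.mem_insert]; omega
    rw [QP, QP, h1, h2, h3, Finset.sum_insert (by simp)]
    simp only [Finset.sum_empty]
    ring

lemma QP_natDegree (i : ℤ) : (QP n f x ib i).natDegree ≤ n := by
  have hsum : ∀ s : Finset ℤ, (∑ k ∈ s, EP n f (x k)).natDegree ≤ n := by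
    intro s
    induction s using Finset.induction_on with
    | empty => simp
    | insert _ _ hnotmem ih =>
      rw [Finset.sum_insert hnotmem]
      exact le_trans (Polynomial.natDegree_add_le _ _) (max_le (EP_natDegree n f _) ih)
  rw [QP]
  exact le_trans (Polynomial.natDegree_sub_le _ _)
    (max_le (le_trans (Polynomial.natDegree_add_le _ _) (max_le (BP_natDegree n f) (hsum _))) (hsum _))

end Corrector

end S1
end

/-- every `n`-th tropical meromorphic function is the tropical quotient
`h ⊘ g = h − g` of two tropical entire functions of degrees `n₁, n₂` with
`max{n₁, n₂} = n` having no common `j`-th roots. -/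
theorem statement1 (n : ℕ) (hn : 1 ≤ n) (f : ℝ → ℝ)
    (hf : Trop.IsTropicalMeromorphic n f) :
    ∃ (n₁ n₂ : ℕ) (g h : ℝ → ℝ),
      Trop.IsTropicalEntire n₁ g ∧ Trop.IsTropicalEntire n₂ h ∧
      max n₁ n₂ = n ∧ (∀ x : ℝ, f x = h x - g x) ∧
      (∀ j : ℕ, 1 ≤ j → j ≤ n → ∀ x : ℝ,
        ¬ (0 < Trop.omega h j x ∧ 0 < Trop.omega g j x)) := by
  classical
  obtain ⟨⟨hcont, x, p, hx, htop, hbot, hF, hdeg, hdegex⟩, -⟩ := hf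
  have hexi : ∀ y : ℝ, ∃ i : ℤ, x (i-1) ≤ y ∧ y < x i := S1.exists_piece_index htop hbot
  choose I hI1 hI2 using hexi
  have hIuniq : ∀ (y : ℝ) (i : ℤ), x (i-1) ≤ y → y < x i → I y = i :=
    fun y i h1 h2 => S1.index_unique hx (hI1 y) (hI2 y) h1 h2
  set ib : ℤ := I 0 with hib
  set q : ℤ → Polynomial ℝ := S1.QP n f x ib with hq
  have hqsucc : ∀ i : ℤ, q (i+1) = q i + S1.EP n f (x i) := fun i => S1.QP_succ n f x ib i
  have hqbase : q ib = S1.BP n f := S1.QP_base n f x ib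
  have hqdeg : ∀ i : ℤ, (q i).natDegree ≤ n := fun i => S1.QP_natDegree n f x ib i
  set g : ℝ → ℝ := fun y => (q (I y)).eval y with hgdef
  have hG : ∀ i : ℤ, ∀ y ∈ Set.Icc (x (i-1)) (x i), g y = (q i).eval y := by
    intro i y hy
    rcases lt_or_eq_of_le hy.2 with h | h
    · show (q (I y)).eval y = _
      rw [hIuniq y i hy.1 h]
    · have hIy : I y = i + 1 := hIuniq y (i+1)
        (by rw [show i+1-1 = i by ring]; exact le_of_eq h.symm)
        (by rw [h]; exact hx (by omega))
      show (q (I y)).eval y = _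
      rw [hIy, hqsucc i, Polynomial.eval_add, h, S1.EP_eval_self, add_zero]
  set hfun : ℝ → ℝ := fun t => f t + g t with hhdef
  have hH : ∀ i : ℤ, ∀ y ∈ Set.Icc (x (i-1)) (x i), hfun y = ((p i) + (q i)).eval y := by
    intro i y hy
    show f y + g y = _
    rw [Polynomial.eval_add, ← hF i y hy, ← hG i y hy]
  -- master computation of the omegas
  have master : ∀ j : ℕ, 1 ≤ j → ∀ y : ℝ,
      Trop.omega g j y = max 0 (-(Trop.omega f j y)) ∧
      Trop.omega hfun j y = Trop.omega f j y + Trop.omega g j y := by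
    intro j hj y
    rcases eq_or_lt_of_le (hI1 y) with hbk | hint
    · -- breakpoint: y = x (I y - 1)
      set k : ℤ := I y - 1 with hk
      rw [← hbk]
      have Of := S1.omega_break hx hF k j
      have Og := S1.omega_break hx hG k j
      have Oh := S1.omega_break hx hH k j
      by_cases h0 : x k = 0
      · -- breakpoint at the origin
        have hy0 : y = 0 := by rw [← hbk, h0]
        have hibk : ib = k + 1 := by rw [hib, ← hy0]; omega
        have hqk1 : q (k+1) = S1.BP n f := by rw [← hibk, hqbase]
        have hqk : q k = S1.BP n f - S1.EP n f 0 := by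
          have h := hqsucc k
          rw [hqk1, h0] at h
          rw [eq_sub_iff_add_eq]
          exact h.symm
        rw [h0] at Of Og Oh ⊢
        rw [S1.sgnR_zero, S1.sgnL_zero, one_pow, taylor_zero, taylor_zero] at Of Og Oh
        simp only [Polynomial.coeff_add] at Oh
        rw [hqk1, hqk, Polynomial.coeff_sub] at Og Oh
        constructor
        · rcases Nat.even_or_odd j with hev | hod
          · have hE0 : (S1.EP n f 0).coeff j = 0 := by
              rw [S1.EP_coeff_zero]; simp [hev]
            have hpow : ((-1 : ℝ)) ^ (j+1) = -1 := Odd.neg_one_pow (Even.add_one hev)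
            rw [hpow, hE0] at Og
            by_cases hjn : j ≤ n
            · rw [S1.BP_coeff, if_pos ⟨hj, hjn, hev⟩] at Og
              rw [Og]; try ring
            · have hc1 : (p (k+1)).coeff j = 0 :=
                Polynomial.coeff_eq_zero_of_natDegree_lt (lt_of_le_of_lt (hdeg _) (by omega))
              have hc2 : (p k).coeff j = 0 :=
                Polynomial.coeff_eq_zero_of_natDegree_lt (lt_of_le_of_lt (hdeg _) (by omega))
              rw [hc1, hc2] at Of
              rw [S1.BP_coeff, if_neg (by tauto)] at Og
              rw [Og, Of]; simp
          · have hpow : ((-1 : ℝ)) ^ (j+1) = 1 := Even.neg_one_pow (Odd.add_one hod)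
            have hB0 : (S1.BP n f).coeff j = 0 := by
              rw [S1.BP_coeff, if_neg (fun hc => (Nat.not_even_iff_odd.mpr hod) hc.2.2)]
            rw [hpow, hB0] at Og
            by_cases hjn : j ≤ n
            · rw [S1.EP_coeff_zero, if_pos ⟨hj, hjn⟩, if_neg (Nat.not_even_iff_odd.mpr hod)] at Og
              rw [Og]; try ring
            · have hc1 : (p (k+1)).coeff j = 0 :=
                Polynomial.coeff_eq_zero_of_natDegree_lt (lt_of_le_of_lt (hdeg _) (by omega))
              have hc2 : (p k).coeff j = 0 :=
                Polynomial.coeff_eq_zero_of_natDegree_lt (lt_of_le_of_lt (hdeg _) (by omega))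
              rw [hc1, hc2] at Of
              rw [S1.EP_coeff_zero, if_neg (by tauto)] at Og
              rw [Og, Of]; simp
        · rw [Of, Og, Oh]; ring
      · -- breakpoint away from the origin
        have hsL : Trop.sgnL (x k) = Trop.sgnR (x k) := S1.sgnL_eq_sgnR h0
        rw [hsL] at Of Og Oh
        have hqtay : ((taylor (x k)) (q (k+1))).coeff j
            = ((taylor (x k)) (q k)).coeff j + ((taylor (x k)) (S1.EP n f (x k))).coeff j := by
          rw [hqsucc k, map_add, Polynomial.coeff_add]
        constructor
        · rw [Og, hqtay]
          by_cases hjn : j ≤ n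
          · rw [S1.taylor_EP, if_pos ⟨hj, hjn⟩, if_neg (fun hc => h0 hc.1)]
            rw [show ∀ a b c : ℝ, a * (b + a * c) - a * b = (a * a) * c by intros; ring]
            rw [S1.sgnR_pow_sq, one_mul]
          · have hE : ((taylor (x k)) (S1.EP n f (x k))).coeff j = 0 := by
              rw [S1.taylor_EP, if_neg (by tauto)]
            have hc1 : ((taylor (x k)) (p (k+1))).coeff j = 0 :=
              Polynomial.coeff_eq_zero_of_natDegree_lt
                (by rw [Polynomial.natDegree_taylor]; exact lt_of_le_of_lt (hdeg _) (by omega))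
            have hc2 : ((taylor (x k)) (p k)).coeff j = 0 :=
              Polynomial.coeff_eq_zero_of_natDegree_lt
                (by rw [Polynomial.natDegree_taylor]; exact lt_of_le_of_lt (hdeg _) (by omega))
            rw [hc1, hc2] at Of
            rw [hE, Of]
            simp
        · simp only [map_add, Polynomial.coeff_add] at Oh
          rw [Of, Og, Oh]; ring
    · -- interior point
      have Of := S1.omega_interior hF hint (hI2 y) j
      have Og := S1.omega_interior hG hint (hI2 y) j
      have Oh := S1.omega_interior hH hint (hI2 y) j
      by_cases hy0 : y = 0
      · subst hy0
        have hq0 : q (I 0) = S1.BP n f := by rw [← hib, hqbase]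
        rw [S1.sgnR_zero, S1.sgnL_zero, one_pow, taylor_zero] at Of Og Oh
        rw [hq0] at Og Oh
        constructor
        · rcases Nat.even_or_odd j with hev | hod
          · have hpow : ((-1 : ℝ)) ^ (j+1) = -1 := Odd.neg_one_pow (Even.add_one hev)
            rw [hpow] at Of Og
            by_cases hjn : j ≤ n
            · rw [S1.BP_coeff, if_pos ⟨hj, hjn, hev⟩] at Og
              rw [Og]; try ring
            · have hc1 : (p (I 0)).coeff j = 0 :=
                Polynomial.coeff_eq_zero_of_natDegree_lt (lt_of_le_of_lt (hdeg _) (by omega))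
              rw [hc1] at Of
              rw [S1.BP_coeff, if_neg (by tauto)] at Og
              rw [Og, Of]; simp
          · have hpow : ((-1 : ℝ)) ^ (j+1) = 1 := Even.neg_one_pow (Odd.add_one hod)
            rw [hpow] at Of Og
            rw [Of, Og]; simp
        · simp only [Polynomial.coeff_add] at Oh
          rw [Of, Og, Oh]; ring
      · have hsL : Trop.sgnL y = Trop.sgnR y := S1.sgnL_eq_sgnR hy0
        rw [hsL] at Of Og Oh
        simp only [sub_self, zero_mul] at Of Og Oh
        rw [Of, Og, Oh]; simp
  -- no poles
  have hNPg : Trop.NoPoles g := by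
    intro j hj y
    rw [(master j hj y).1]
    exact le_max_left _ _
  have hNPh : Trop.NoPoles hfun := by
    intro j hj y
    rw [(master j hj y).2, (master j hj y).1]
    have := le_max_right (0 : ℝ) (-(Trop.omega f j y))
    linarith
  -- degrees
  set S₁ : Set ℕ := Set.range (fun i : ℤ => (q i).natDegree) with hS1
  set S₂ : Set ℕ := Set.range (fun i : ℤ => ((p i) + (q i)).natDegree) with hS2
  have hS1ne : S₁.Nonempty := ⟨_, ⟨0, rfl⟩⟩
  have hS2ne : S₂.Nonempty := ⟨_, ⟨0, rfl⟩⟩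
  have hS1bdd : BddAbove S₁ := ⟨n, by rintro m ⟨i, rfl⟩; exact hqdeg i⟩
  have hS2bdd : BddAbove S₂ := by
    refine ⟨n, ?_⟩
    rintro m ⟨i, rfl⟩
    exact le_trans (Polynomial.natDegree_add_le _ _) (max_le (hdeg i) (hqdeg i))
  set n₁ : ℕ := sSup S₁ with hn1
  set n₂ : ℕ := sSup S₂ with hn2
  have hn1le : n₁ ≤ n := csSup_le hS1ne (by rintro m ⟨i, rfl⟩; exact hqdeg i)
  have hn2le : n₂ ≤ n := by
    apply csSup_le hS2ne
    rintro m ⟨i, rfl⟩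
    exact le_trans (Polynomial.natDegree_add_le _ _) (max_le (hdeg i) (hqdeg i))
  have hmax : max n₁ n₂ = n := by
    apply le_antisymm (max_le hn1le hn2le)
    obtain ⟨i0, hi0⟩ := hdegex
    have heq : p i0 = (p i0 + q i0) - q i0 := by ring
    have h1 : (p i0).natDegree ≤ max ((p i0 + q i0).natDegree) ((q i0).natDegree) := by
      calc (p i0).natDegree = ((p i0 + q i0) - q i0).natDegree := by rw [← heq]
        _ ≤ _ := Polynomial.natDegree_sub_le _ _
    have h2 : ((p i0) + (q i0)).natDegree ≤ n₂ := le_csSup hS2bdd ⟨i0, rfl⟩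
    have h3 : (q i0).natDegree ≤ n₁ := le_csSup hS1bdd ⟨i0, rfl⟩
    rw [← hi0]
    calc (p i0).natDegree ≤ max ((p i0 + q i0).natDegree) ((q i0).natDegree) := h1
      _ ≤ max n₂ n₁ := max_le_max h2 h3
      _ = max n₁ n₂ := max_comm _ _
  refine ⟨n₁, n₂, g, hfun, ?_, ?_, hmax, ?_, ?_⟩
  · refine ⟨⟨S1.continuous_of_pieces hx (fun y => ⟨I y, hI1 y, hI2 y⟩) hG, x, q,
      hx, htop, hbot, hG, fun i => le_csSup hS1bdd ⟨i, rfl⟩, ?_⟩, hNPg⟩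
    obtain ⟨m, hm⟩ := Nat.sSup_mem hS1ne hS1bdd
    exact ⟨m, hm⟩
  · refine ⟨⟨S1.continuous_of_pieces hx (fun y => ⟨I y, hI1 y, hI2 y⟩) hH, x, fun i => p i + q i,
      hx, htop, hbot, hH, fun i => le_csSup hS2bdd ⟨i, rfl⟩, ?_⟩, hNPh⟩
    obtain ⟨m, hm⟩ := Nat.sSup_mem hS2ne hS2bdd
    exact ⟨m, hm⟩
  · intro t
    show f t = (f t + g t) - g t
    ring
  · intro j hj _ z hcontra
    obtain ⟨hhz, hgz⟩ := hcontra
    rw [(master j hj z).1] at hgz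
    have hneg : 0 < -(Trop.omega f j z) := by
      by_contra hc
      push_neg at hc
      rw [max_eq_left hc] at hgz
      exact lt_irrefl 0 hgz
    rw [(master j hj z).2, (master j hj z).1, max_eq_right hneg.le] at hhz
    linarith
end

section
/- Let n ≥ 1 and let f be an n-th tropical meromorphic function on [−r, r] for some r > 0. Fix x ∈ (−r, r), let x < x₁ < ⋯ < x_ν < r be all points of (x, r) at which some one-sided j-th derivative of f (1 ≤ j ≤ n) fails to exist two-sidedly, and let −r < x_{−μ} < ⋯ < x_{−1} < x be the corresponding points of (−r, x). Then f(r) − f(x) = Σ_{j=1}^{n} ( (f^{(j)}(x⁺)/j!) (r−x)^j + Σ_{i=1}^{ν} τ_f^{(j)}(x_i) (r−x_i)^j ) and f(x) − f(−r) = Σ_{j=1}^{n} ( (−1)^{j+1} (f^{(j)}(x⁻)/j!) (r+x)^j + (−1)^j Σ_{i=1}^{μ} τ_f^{(j)}(x_{−i}) (r+x_{−i})^j ), where τ_f^{(j)}(y) = (f^{(j)}(y⁺) − f^{(j)}(y⁻))/j!. -/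
open Filter MeasureTheory Asymptotics Polynomial
open scoped Classical

/-!
On each piece `f` is a polynomial of degree at most `n`, so its Taylor expansion at any point of
the piece is exact. Crossing a breakpoint `y` replaces the left piece by the right one, and their
difference is the difference of the two Taylor expansions at `y`, i.e. `∑ⱼ τ_f^{(j)}(y) (t - y)^j`.
Telescoping these jumps over the breakpoints in `(c, d)` relates the piece to the left of `d`
with the piece to the right of `c`; evaluating at `t = r` on `(x, r)` and at `t = -r` on
`(-r, x)` gives the two identities, and breakpoints where every jump vanishes contribute nothing.
-/

theorem Finset.sum_range_succ_eq_add_sum_Icc {M : Type*} [AddCommMonoid M] (g : ℕ → M) (n : ℕ) :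
    ∑ j ∈ Finset.range (n + 1), g j = g 0 + ∑ j ∈ Finset.Icc 1 n, g j := by
  rw [Finset.range_eq_Ico, Finset.sum_eq_sum_Ico_succ_bot (Nat.succ_pos n)]
  rfl

theorem Polynomial.eval_eq_sum_range_iterate_derivative {K : Type*} [Field K] [CharZero K]
    {p : K[X]} {n : ℕ} (hp : p.natDegree ≤ n) (y t : K) :
    p.eval t = ∑ j ∈ Finset.range (n + 1),
      (derivative^[j] p).eval y / (Nat.factorial j : K) * (t - y) ^ j := by
  have hdeg : (taylor y p).natDegree < n + 1 := by rw [natDegree_taylor]; omega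
  rw [← taylor_eval_sub y p, eval_eq_sum_range' hdeg]
  refine Finset.sum_congr rfl fun j _ => ?_
  rw [taylor_coeff, ← factorial_smul_hasseDeriv, LinearMap.smul_apply, eval_smul, nsmul_eq_mul,
    mul_div_cancel_left₀ _ (Nat.cast_ne_zero.mpr (Nat.factorial_ne_zero j))]

namespace Trop

variable {f : ℝ → ℝ} {n : ℕ} {p q : ℝ[X]} {x : ℝ}

theorem IsRightPiece.eval_self (hp : IsRightPiece f x p) : p.eval x = f x := by
  obtain ⟨ε, hε, h⟩ := hp
  exact (h x ⟨le_rfl, by linarith⟩).symm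

theorem IsLeftPiece.eval_self (hp : IsLeftPiece f x p) : p.eval x = f x := by
  obtain ⟨ε, hε, h⟩ := hp
  exact (h x ⟨by linarith, le_rfl⟩).symm

theorem IsRightPiece.unique (hp : IsRightPiece f x p) (hq : IsRightPiece f x q) : p = q := by
  obtain ⟨ε, hε, hp⟩ := hp
  obtain ⟨δ, hδ, hq⟩ := hq
  refine eq_of_infinite_eval_eq p q <|
    (Set.Ico_infinite (lt_add_of_pos_right x (lt_min hε hδ))).mono fun y hy => ?_
  exact (hp y ⟨hy.1, hy.2.trans_le (by simp)⟩).symm.trans (hq y ⟨hy.1, hy.2.trans_le (by simp)⟩)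

theorem IsLeftPiece.unique (hp : IsLeftPiece f x p) (hq : IsLeftPiece f x q) : p = q := by
  obtain ⟨ε, hε, hp⟩ := hp
  obtain ⟨δ, hδ, hq⟩ := hq
  refine eq_of_infinite_eval_eq p q <|
    (Set.Ioc_infinite (sub_lt_self x (lt_min hε hδ))).mono fun y hy => ?_
  exact (hp y ⟨(sub_le_sub_left (min_le_left ε δ) x).trans_lt hy.1, hy.2⟩).symm.trans
    (hq y ⟨(sub_le_sub_left (min_le_right ε δ) x).trans_lt hy.1, hy.2⟩)

theorem IsRightPiece.rightPoly_eq (hp : IsRightPiece f x p) : rightPoly f x = p := by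
  have hex : ∃ q, IsRightPiece f x q := ⟨p, hp⟩
  rw [rightPoly, dif_pos hex]
  exact hex.choose_spec.unique hp

theorem IsLeftPiece.leftPoly_eq (hp : IsLeftPiece f x p) : leftPoly f x = p := by
  have hex : ∃ q, IsLeftPiece f x q := ⟨p, hp⟩
  rw [leftPoly, dif_pos hex]
  exact hex.choose_spec.unique hp

theorem IsRightPiece.eval_eq_add_sum_rderiv (hp : IsRightPiece f x p) (hpn : p.natDegree ≤ n)
    (t : ℝ) :
    p.eval t = f x + ∑ j ∈ Finset.Icc 1 n, rderiv f j x / (Nat.factorial j : ℝ) * (t - x) ^ j := by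
  rw [p.eval_eq_sum_range_iterate_derivative hpn x t, Finset.sum_range_succ_eq_add_sum_Icc]
  simp [rderiv, hp.rightPoly_eq, hp.eval_self]

theorem IsLeftPiece.eval_eq_add_sum_lderiv (hp : IsLeftPiece f x p) (hpn : p.natDegree ≤ n)
    (t : ℝ) :
    p.eval t = f x + ∑ j ∈ Finset.Icc 1 n, lderiv f j x / (Nat.factorial j : ℝ) * (t - x) ^ j := by
  rw [p.eval_eq_sum_range_iterate_derivative hpn x t, Finset.sum_range_succ_eq_add_sum_Icc]
  simp [lderiv, hp.leftPoly_eq, hp.eval_self]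

theorem eval_sub_eval_eq_sum_tau (hp : IsLeftPiece f x p) (hq : IsRightPiece f x q)
    (hpn : p.natDegree ≤ n) (hqn : q.natDegree ≤ n) (t : ℝ) :
    q.eval t - p.eval t = ∑ j ∈ Finset.Icc 1 n, tau f j x * (t - x) ^ j := by
  rw [hq.eval_eq_add_sum_rderiv hqn, hp.eval_eq_add_sum_lderiv hpn, add_sub_add_left_eq_sub,
    ← Finset.sum_sub_distrib]
  refine Finset.sum_congr rfl fun j _ => ?_
  rw [tau]
  ring

theorem tau_eq_zero_of_isLeftPiece_of_isRightPiece (hl : IsLeftPiece f x p)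
    (hr : IsRightPiece f x p) (j : ℕ) : tau f j x = 0 := by
  rw [tau, rderiv, lderiv, hl.leftPoly_eq, hr.rightPoly_eq, sub_self, zero_div]

end Trop

section BreakpointIndex

variable {α : Type*} [LinearOrder α] {xs : ℤ → α}

theorem exists_mem_Ico_sub_one [NoMaxOrder α] (hxs : StrictMono xs)
    (htop : Tendsto xs atTop atTop) (hbot : Tendsto xs atBot atBot) (y : α) :
    ∃ i, y ∈ Set.Ico (xs (i - 1)) (xs i) := by
  obtain ⟨i₀, hi₀⟩ := (hbot.eventually (eventually_le_atBot y)).exists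
  obtain ⟨i, hi, hmin⟩ := Int.exists_least_of_bdd (P := fun i => y < xs i)
    ⟨i₀, fun i hi => (hxs.lt_iff_lt.mp (hi₀.trans_lt hi)).le⟩
    (htop.eventually (eventually_gt_atTop y)).exists
  exact ⟨i, not_lt.mp fun h => (hmin _ h).not_gt (sub_one_lt i), hi⟩

theorem exists_mem_Ioc_sub_one [NoMinOrder α] (hxs : StrictMono xs)
    (htop : Tendsto xs atTop atTop) (hbot : Tendsto xs atBot atBot) (y : α) :
    ∃ i, y ∈ Set.Ioc (xs (i - 1)) (xs i) := by
  obtain ⟨i₀, hi₀⟩ := (hbot.eventually (eventually_lt_atBot y)).exists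
  obtain ⟨i, hi, hmin⟩ := Int.exists_least_of_bdd (P := fun i => y ≤ xs i)
    ⟨i₀, fun i hi => (hxs.lt_iff_lt.mp (hi₀.trans_le hi)).le⟩
    (htop.eventually (eventually_ge_atTop y)).exists
  exact ⟨i, not_le.mp fun h => (hmin _ h).not_gt (sub_one_lt i), hi⟩

theorem StrictMono.apply_mem_Ioo_iff (hxs : StrictMono xs) {c d : α} {k m i : ℤ}
    (hc : c ∈ Set.Ico (xs (k - 1)) (xs k)) (hd : d ∈ Set.Ioc (xs (m - 1)) (xs m)) :
    xs i ∈ Set.Ioo c d ↔ i ∈ Finset.Ico k m := by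
  rw [Finset.mem_Ico]
  constructor
  · rintro ⟨hci, hid⟩
    have := hxs.lt_iff_lt.mp (hc.1.trans_lt hci)
    exact ⟨by omega, hxs.lt_iff_lt.mp (hid.trans_le hd.2)⟩
  · rintro ⟨hki, him⟩
    exact ⟨hc.2.trans_le (hxs.monotone hki), (hxs.monotone (by omega : i ≤ m - 1)).trans_lt hd.1⟩

end BreakpointIndex

namespace Trop

section Pieces

variable {f : ℝ → ℝ} {n : ℕ} {xs : ℤ → ℝ} {p : ℤ → ℝ[X]}

theorem isRightPiece_of_mem_Ico
    (hpiece : ∀ i : ℤ, ∀ y ∈ Set.Icc (xs (i - 1)) (xs i), f y = (p i).eval y) {i : ℤ} {y : ℝ}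
    (hy : y ∈ Set.Ico (xs (i - 1)) (xs i)) : IsRightPiece f y (p i) :=
  ⟨xs i - y, sub_pos.mpr hy.2, fun z hz => hpiece i z ⟨hy.1.trans hz.1, by linarith [hz.2]⟩⟩

theorem isLeftPiece_of_mem_Ioc
    (hpiece : ∀ i : ℤ, ∀ y ∈ Set.Icc (xs (i - 1)) (xs i), f y = (p i).eval y) {i : ℤ} {y : ℝ}
    (hy : y ∈ Set.Ioc (xs (i - 1)) (xs i)) : IsLeftPiece f y (p i) :=
  ⟨y - xs (i - 1), sub_pos.mpr hy.1, fun z hz => hpiece i z ⟨by linarith [hz.1], hz.2.trans hy.2⟩⟩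

theorem tau_eq_zero_of_notMem_range (hxs : StrictMono xs)
    (htop : Tendsto xs atTop atTop) (hbot : Tendsto xs atBot atBot)
    (hpiece : ∀ i : ℤ, ∀ y ∈ Set.Icc (xs (i - 1)) (xs i), f y = (p i).eval y) {y : ℝ}
    (hy : y ∉ Set.range xs) (j : ℕ) : tau f j y = 0 := by
  obtain ⟨i, hi⟩ := exists_mem_Ico_sub_one hxs htop hbot y
  have hlt : xs (i - 1) < y := hi.1.lt_of_ne fun h => hy ⟨_, h⟩
  exact tau_eq_zero_of_isLeftPiece_of_isRightPiece
    (isLeftPiece_of_mem_Ioc hpiece ⟨hlt, hi.2.le⟩) (isRightPiece_of_mem_Ico hpiece hi) j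

theorem eval_sub_eval_eq_sum_Ico_tau (hxs : StrictMono xs)
    (hpiece : ∀ i : ℤ, ∀ y ∈ Set.Icc (xs (i - 1)) (xs i), f y = (p i).eval y)
    (hdeg : ∀ i, (p i).natDegree ≤ n) {k m : ℤ} (hkm : k ≤ m) (t : ℝ) :
    (p m).eval t - (p k).eval t = ∑ i ∈ Finset.Ico k m,
      ∑ j ∈ Finset.Icc 1 n, tau f j (xs i) * (t - xs i) ^ j := by
  induction m, hkm using Int.leInduction with
  | base => simp
  | succ m hkm ih =>
    have hl : IsLeftPiece f (xs m) (p m) :=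
      isLeftPiece_of_mem_Ioc hpiece ⟨hxs (sub_one_lt m), le_rfl⟩
    have hr : IsRightPiece f (xs m) (p (m + 1)) :=
      isRightPiece_of_mem_Ico hpiece (i := m + 1) ⟨by simp, hxs (lt_add_one m)⟩
    rw [← Finset.insert_Ico_right_eq_Ico_add_one hkm, Finset.sum_insert Finset.right_notMem_Ico,
      ← eval_sub_eval_eq_sum_tau hl hr (hdeg m) (hdeg (m + 1)), ← ih]
    ring

end Pieces

namespace IsNthPiecewisePoly

variable {f : ℝ → ℝ} {n : ℕ}

theorem exists_isRightPiece (hf : IsNthPiecewisePoly n f) (x : ℝ) :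
    ∃ p, IsRightPiece f x p ∧ p.natDegree ≤ n := by
  obtain ⟨-, xs, p, hxs, htop, hbot, hpiece, hdeg, -⟩ := hf
  obtain ⟨i, hi⟩ := exists_mem_Ico_sub_one hxs htop hbot x
  exact ⟨p i, isRightPiece_of_mem_Ico hpiece hi, hdeg i⟩

theorem exists_isLeftPiece (hf : IsNthPiecewisePoly n f) (x : ℝ) :
    ∃ p, IsLeftPiece f x p ∧ p.natDegree ≤ n := by
  obtain ⟨-, xs, p, hxs, htop, hbot, hpiece, hdeg, -⟩ := hf
  obtain ⟨i, hi⟩ := exists_mem_Ioc_sub_one hxs htop hbot x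
  exact ⟨p i, isLeftPiece_of_mem_Ioc hpiece hi, hdeg i⟩

theorem exists_finset_eval_leftPoly_sub_eval_rightPoly (hf : IsNthPiecewisePoly n f) {c d : ℝ}
    (hcd : c < d) :
    ∃ s : Finset ℝ, ↑s ⊆ Set.Ioo c d ∧ (∀ y ∈ Set.Ioo c d, y ∉ s → ∀ j, tau f j y = 0) ∧
      ∀ t, (leftPoly f d).eval t - (rightPoly f c).eval t =
        ∑ y ∈ s, ∑ j ∈ Finset.Icc 1 n, tau f j y * (t - y) ^ j := by
  obtain ⟨-, xs, p, hxs, htop, hbot, hpiece, hdeg, -⟩ := hf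
  obtain ⟨k, hk⟩ := exists_mem_Ico_sub_one hxs htop hbot c
  obtain ⟨m, hm⟩ := exists_mem_Ioc_sub_one hxs htop hbot d
  have hkm : k ≤ m := by
    have := hxs.lt_iff_lt.mp (hk.1.trans_lt (hcd.trans_le hm.2))
    omega
  refine ⟨(Finset.Ico k m).image xs, ?_, ?_, fun t => ?_⟩
  · intro y hy
    obtain ⟨i, hi, rfl⟩ := Finset.mem_image.mp hy
    exact (hxs.apply_mem_Ioo_iff hk hm).mpr hi
  · rintro y hy hys
    refine tau_eq_zero_of_notMem_range hxs htop hbot hpiece ?_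
    rintro ⟨i, rfl⟩
    exact hys (Finset.mem_image_of_mem xs ((hxs.apply_mem_Ioo_iff hk hm).mp hy))
  · rw [(isLeftPiece_of_mem_Ioc hpiece hm).leftPoly_eq,
      (isRightPiece_of_mem_Ico hpiece hk).rightPoly_eq,
      eval_sub_eval_eq_sum_Ico_tau hxs hpiece hdeg hkm, Finset.sum_image hxs.injective.injOn]

theorem eval_leftPoly_sub_eval_rightPoly (hf : IsNthPiecewisePoly n f) {c d : ℝ} (hcd : c < d)
    {ν : ℕ} (a : Fin ν → ℝ) (ha : Function.Injective a) (haI : ∀ i, a i ∈ Set.Ioo c d)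
    (hall : ∀ y ∈ Set.Ioo c d, (∃ j : ℕ, 1 ≤ j ∧ j ≤ n ∧ tau f j y ≠ 0) ↔ ∃ i, a i = y)
    (t : ℝ) :
    (leftPoly f d).eval t - (rightPoly f c).eval t =
      ∑ j ∈ Finset.Icc 1 n, ∑ i, tau f j (a i) * (t - a i) ^ j := by
  obtain ⟨s, hsI, hvan, heq⟩ := hf.exists_finset_eval_leftPoly_sub_eval_rightPoly hcd
  have himage : Finset.univ.image a ⊆ s := by
    intro y hy
    obtain ⟨i, -, rfl⟩ := Finset.mem_image.mp hy
    by_contra hi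
    obtain ⟨j, -, -, hj⟩ := (hall _ (haI i)).mpr ⟨i, rfl⟩
    exact hj (hvan _ (haI i) hi j)
  rw [heq, ← Finset.sum_subset himage, Finset.sum_image ha.injOn, Finset.sum_comm]
  intro y hys hya
  refine Finset.sum_eq_zero fun j hj => ?_
  have hnot : ¬ ∃ i, a i = y := fun ⟨i, hi⟩ =>
    hya (Finset.mem_image.mpr ⟨i, Finset.mem_univ i, hi⟩)
  rw [← hall y (hsI hys)] at hnot
  push Not at hnot
  rw [Finset.mem_Icc] at hj
  rw [hnot j hj.1 hj.2, zero_mul]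

theorem sub_eq_sum_rderiv_add_sum_tau (hf : IsNthPiecewisePoly n f) {c d : ℝ} (hcd : c < d)
    {ν : ℕ} (a : Fin ν → ℝ) (ha : Function.Injective a) (haI : ∀ i, a i ∈ Set.Ioo c d)
    (hall : ∀ y ∈ Set.Ioo c d, (∃ j : ℕ, 1 ≤ j ∧ j ≤ n ∧ tau f j y ≠ 0) ↔ ∃ i, a i = y) :
    f d - f c = ∑ j ∈ Finset.Icc 1 n,
      (rderiv f j c / (Nat.factorial j : ℝ) * (d - c) ^ j
        + ∑ i, tau f j (a i) * (d - a i) ^ j) := by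
  obtain ⟨p, hp, hpn⟩ := hf.exists_isRightPiece c
  obtain ⟨q, hq, -⟩ := hf.exists_isLeftPiece d
  have hjumps := hf.eval_leftPoly_sub_eval_rightPoly hcd a ha haI hall d
  rw [hq.leftPoly_eq, hp.rightPoly_eq, hq.eval_self, hp.eval_eq_add_sum_rderiv hpn] at hjumps
  rw [Finset.sum_add_distrib]
  linarith

theorem sub_eq_sum_lderiv_add_sum_tau (hf : IsNthPiecewisePoly n f) {e c : ℝ} (hec : e < c)
    {μ : ℕ} (b : Fin μ → ℝ) (hb : Function.Injective b) (hbI : ∀ i, b i ∈ Set.Ioo e c)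
    (hall : ∀ y ∈ Set.Ioo e c, (∃ j : ℕ, 1 ≤ j ∧ j ≤ n ∧ tau f j y ≠ 0) ↔ ∃ i, b i = y) :
    f c - f e = ∑ j ∈ Finset.Icc 1 n,
      (-(lderiv f j c / (Nat.factorial j : ℝ) * (e - c) ^ j)
        + ∑ i, tau f j (b i) * (e - b i) ^ j) := by
  obtain ⟨q, hq, hqn⟩ := hf.exists_isLeftPiece c
  obtain ⟨p, hp, -⟩ := hf.exists_isRightPiece e
  have hjumps := hf.eval_leftPoly_sub_eval_rightPoly hec b hb hbI hall e
  rw [hq.leftPoly_eq, hp.rightPoly_eq, hp.eval_self, hq.eval_eq_add_sum_lderiv hqn] at hjumps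
  rw [Finset.sum_add_distrib, Finset.sum_neg_distrib]
  linarith

end IsNthPiecewisePoly

end Trop

theorem statement2_general (n : ℕ) (r : ℝ) (f : ℝ → ℝ)
    (hf : Trop.IsTropicalMeromorphic n f)
    (x : ℝ) (hx : x ∈ Set.Ioo (-r) r)
    (ν μ : ℕ) (a : Fin ν → ℝ) (b : Fin μ → ℝ)
    (ha : StrictMono a) (hb : StrictMono b)
    (haR : ∀ i, a i ∈ Set.Ioo x r) (hbR : ∀ i, b i ∈ Set.Ioo (-r) x)
    (haAll : ∀ y ∈ Set.Ioo x r,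
      ((∃ j : ℕ, 1 ≤ j ∧ j ≤ n ∧ Trop.tau f j y ≠ 0) ↔ ∃ i, a i = y))
    (hbAll : ∀ y ∈ Set.Ioo (-r) x,
      ((∃ j : ℕ, 1 ≤ j ∧ j ≤ n ∧ Trop.tau f j y ≠ 0) ↔ ∃ i, b i = y)) :
    (f r - f x = ∑ j ∈ Finset.Icc 1 n,
      ((Trop.rderiv f j x / (Nat.factorial j : ℝ)) * (r - x) ^ j
        + ∑ i, Trop.tau f j (a i) * (r - a i) ^ j)) ∧
    (f x - f (-r) = ∑ j ∈ Finset.Icc 1 n,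
      ((-1 : ℝ) ^ (j + 1) * (Trop.lderiv f j x / (Nat.factorial j : ℝ)) * (r + x) ^ j
        + (-1 : ℝ) ^ j * ∑ i, Trop.tau f j (b i) * (r + b i) ^ j)) := by
  obtain ⟨hpw, -⟩ := hf
  refine ⟨hpw.sub_eq_sum_rderiv_add_sum_tau hx.2 a ha.injective haR haAll, ?_⟩
  rw [hpw.sub_eq_sum_lderiv_add_sum_tau hx.1 b hb.injective hbR hbAll]
  have hneg : ∀ (y : ℝ) (j : ℕ), (-r - y) ^ j = (-1) ^ j * (r + y) ^ j := fun y j => by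
    rw [← neg_add', neg_pow]
  refine Finset.sum_congr rfl fun j _ => ?_
  rw [hneg, Finset.mul_sum]
  congr 1
  · ring
  · exact Finset.sum_congr rfl fun i _ => by rw [hneg]; ring

/-- Lemma 3.1: one-sided Taylor-type expansions of an `n`-th tropical
meromorphic function over `[−r, r]`, with jump corrections `τ_f^{(j)}` at the points where
some one-sided `j`-th derivative fails to exist two-sidedly. -/
theorem statement2 (n : ℕ) (hn : 1 ≤ n) (r : ℝ) (hr : 0 < r) (f : ℝ → ℝ)
    (hf : Trop.IsTropicalMeromorphic n f)
    (x : ℝ) (hx : x ∈ Set.Ioo (-r) r)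
    (ν μ : ℕ) (a : Fin ν → ℝ) (b : Fin μ → ℝ)
    (ha : StrictMono a) (hb : StrictMono b)
    (haR : ∀ i, a i ∈ Set.Ioo x r) (hbR : ∀ i, b i ∈ Set.Ioo (-r) x)
    (haAll : ∀ y ∈ Set.Ioo x r,
      ((∃ j : ℕ, 1 ≤ j ∧ j ≤ n ∧ Trop.tau f j y ≠ 0) ↔ ∃ i, a i = y))
    (hbAll : ∀ y ∈ Set.Ioo (-r) x,
      ((∃ j : ℕ, 1 ≤ j ∧ j ≤ n ∧ Trop.tau f j y ≠ 0) ↔ ∃ i, b i = y)) :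
    (f r - f x = ∑ j ∈ Finset.Icc 1 n,
      ((Trop.rderiv f j x / (Nat.factorial j : ℝ)) * (r - x) ^ j
        + ∑ i, Trop.tau f j (a i) * (r - a i) ^ j)) ∧
    (f x - f (-r) = ∑ j ∈ Finset.Icc 1 n,
      ((-1 : ℝ) ^ (j + 1) * (Trop.lderiv f j x / (Nat.factorial j : ℝ)) * (r + x) ^ j
        + (-1 : ℝ) ^ j * ∑ i, Trop.tau f j (b i) * (r + b i) ^ j)) :=
  statement2_general n r f hf x hx ν μ a b ha hb haR hbR haAll hbAll
end

section
/- (n-th tropical Jensen formula) Let n ≥ 1 and let f be an n-th tropical meromorphic function on [−r, r] for some r > 0. Then f(0) = ½[f(r)+f(−r)] − ½ Σ_{j=1}^{n} Σ_{y} |ω_f^{(j)}(y)| (r−|y|)^j + ½ Σ_{j=1}^{n} Σ_{z} |ω_f^{(j)}(z)| (r−|z|)^j, where for each j the first inner sum runs over all j-th roots y of f in (−r, r) and the second over all j-th poles z of f in (−r, r). -/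
open Filter MeasureTheory Asymptotics Polynomial
open scoped Classical

noncomputable section
namespace TropAux

open Trop Polynomial Filter

lemma rightPoly_eq {f : ℝ → ℝ} {x : ℝ} {p : Polynomial ℝ} (hp : IsRightPiece f x p) :
    rightPoly f x = p := by
  have hex : ∃ q, IsRightPiece f x q := ⟨p, hp⟩
  rw [Trop.rightPoly, dif_pos hex]
  obtain ⟨ε, hε, h1⟩ := hex.choose_spec
  obtain ⟨δ, hδ, h2⟩ := hp
  apply Polynomial.eq_of_infinite_eval_eq
  refine Set.Infinite.mono ?_ (Set.Ioo_infinite (show x < x + min ε δ by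
    have := lt_min hε hδ; linarith))
  intro y hy
  obtain ⟨hy1, hy2⟩ := hy
  have e1 : f y = (hex.choose).eval y := h1 y ⟨hy1.le, by
    have : min ε δ ≤ ε := min_le_left _ _; linarith⟩
  have e2 : f y = p.eval y := h2 y ⟨hy1.le, by
    have : min ε δ ≤ δ := min_le_right _ _; linarith⟩
  simp only [Set.mem_setOf_eq]
  rw [← e1, ← e2]

lemma leftPoly_eq {f : ℝ → ℝ} {x : ℝ} {p : Polynomial ℝ} (hp : IsLeftPiece f x p) :
    leftPoly f x = p := by
  have hex : ∃ q, IsLeftPiece f x q := ⟨p, hp⟩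
  rw [Trop.leftPoly, dif_pos hex]
  obtain ⟨ε, hε, h1⟩ := hex.choose_spec
  obtain ⟨δ, hδ, h2⟩ := hp
  apply Polynomial.eq_of_infinite_eval_eq
  refine Set.Infinite.mono ?_ (Set.Ioo_infinite (show x - min ε δ < x by
    have := lt_min hε hδ; linarith))
  intro y hy
  obtain ⟨hy1, hy2⟩ := hy
  have e1 : f y = (hex.choose).eval y := h1 y ⟨by
    have : min ε δ ≤ ε := min_le_left _ _; linarith, hy2.le⟩
  have e2 : f y = p.eval y := h2 y ⟨by
    have : min ε δ ≤ δ := min_le_right _ _; linarith, hy2.le⟩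
  simp only [Set.mem_setOf_eq]
  rw [← e1, ← e2]

lemma range_succ_eq_insert (n : ℕ) : Finset.range (n + 1) = insert 0 (Finset.Icc 1 n) := by
  ext i
  simp only [Finset.mem_range, Finset.mem_insert, Finset.mem_Icc]
  omega

lemma taylor_expand {q : Polynomial ℝ} {n : ℕ} (h : q.natDegree ≤ n) (c t : ℝ) :
    q.eval t = ∑ j ∈ Finset.range (n + 1),
      ((Polynomial.derivative^[j] q).eval c) * (t - c) ^ j / (Nat.factorial j : ℝ) := by
  conv_lhs => rw [← Polynomial.taylor_eval_sub c q t]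
  rw [Polynomial.eval_eq_sum_range'
    (lt_of_le_of_lt (by rw [Polynomial.natDegree_taylor]; exact h) (Nat.lt_succ_self n))]
  refine Finset.sum_congr rfl fun j _ => ?_
  rw [Polynomial.taylor_coeff]
  have hd : Polynomial.derivative^[j] q = (Nat.factorial j) • (Polynomial.hasseDeriv j q) := by
    rw [← Polynomial.factorial_smul_hasseDeriv]; rfl
  rw [hd]
  have hfac : (Nat.factorial j : ℝ) ≠ 0 := Nat.cast_ne_zero.mpr (Nat.factorial_ne_zero j)
  rw [Polynomial.eval_smul, nsmul_eq_mul]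
  push_cast
  field_simp

lemma int_Ico_succ_insert {a b : ℤ} (h : a ≤ b) :
    Finset.Ico a (b + 1) = insert b (Finset.Ico a b) := by
  ext i
  simp only [Finset.mem_Ico, Finset.mem_insert]
  omega

lemma telescope (g : ℤ → ℝ) (a : ℤ) : ∀ b, a ≤ b →
    ∑ i ∈ Finset.Ico a b, (g (i + 1) - g i) = g b - g a := by
  refine Int.le_induction ?_ ?_
  · simp
  · intro b hb ih
    rw [int_Ico_succ_insert hb, Finset.sum_insert (by simp), ih]
    ring


lemma jensen_core (n : ℕ) (hn : 1 ≤ n) (r : ℝ) (hr : 0 < r) (f : ℝ → ℝ)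
    (x : ℤ → ℝ) (p : ℤ → Polynomial ℝ) (hmono : StrictMono x)
    (htop : Tendsto x atTop atTop) (hbot : Tendsto x atBot atBot)
    (hfp : ∀ i : ℤ, ∀ y ∈ Set.Icc (x (i - 1)) (x i), f y = (p i).eval y)
    (hdeg : ∀ i, (p i).natDegree ≤ n) :
    f 0 = (f r + f (-r)) / 2
      - ∑ j ∈ Finset.Icc 1 n, Trop.Nroot j r f
      + ∑ j ∈ Finset.Icc 1 n, Trop.Npole j r f := by
  -- least index lemmas
  have hleast : ∀ t : ℝ, ∃ i : ℤ, t < x i ∧ ∀ k, t < x k → i ≤ k := by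
    intro t
    obtain ⟨i0, hi0⟩ := (hbot.eventually (eventually_le_atBot t)).exists
    obtain ⟨i1, hi1⟩ := (htop.eventually (eventually_gt_atTop t)).exists
    obtain ⟨lb, h1, h2⟩ := Int.exists_least_of_bdd (P := fun i => t < x i)
      ⟨i0, fun z hz => le_of_not_gt fun hc =>
        lt_irrefl t (lt_of_lt_of_le hz (le_trans (hmono hc).le hi0))⟩ ⟨i1, hi1⟩
    exact ⟨lb, h1, h2⟩
  have hleastW : ∀ t : ℝ, ∃ i : ℤ, t ≤ x i ∧ ∀ k, t ≤ x k → i ≤ k := by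
    intro t
    obtain ⟨i0, hi0⟩ := (hbot.eventually (eventually_lt_atBot t)).exists
    obtain ⟨i1, hi1⟩ := (htop.eventually (eventually_ge_atTop t)).exists
    obtain ⟨lb, h1, h2⟩ := Int.exists_least_of_bdd (P := fun i => t ≤ x i)
      ⟨i0, fun z hz => le_of_not_gt fun hc =>
        lt_irrefl t (lt_of_le_of_lt hz (lt_of_le_of_lt (hmono hc).le hi0))⟩ ⟨i1, hi1⟩
    exact ⟨lb, h1, h2⟩
  obtain ⟨a, ha1, ha2⟩ := hleast 0
  obtain ⟨a', ha'1, ha'2⟩ := hleastW 0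
  obtain ⟨b, hb1, hb2⟩ := hleastW r
  obtain ⟨c, hc1, hc2⟩ := hleastW (-r)
  have hxa1 : x (a - 1) ≤ 0 := by
    by_contra hcon; push_neg at hcon
    have := ha2 _ hcon; omega
  have hxa'1 : x (a' - 1) < 0 := by
    by_contra hcon; push_neg at hcon
    have := ha'2 _ hcon; omega
  have hxb1 : x (b - 1) < r := by
    by_contra hcon; push_neg at hcon
    have := hb2 _ hcon; omega
  have hxc1 : x (c - 1) < -r := by
    by_contra hcon; push_neg at hcon
    have := hc2 _ hcon; omega
  have hab : a ≤ b := ha2 b (lt_of_lt_of_le hr hb1)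
  have hca' : c ≤ a' := hc2 a' (le_trans (by linarith) ha'1)
  -- piece identification
  have hRb : ∀ i : ℤ, rightPoly f (x i) = p (i + 1) := by
    intro i
    apply rightPoly_eq
    refine ⟨x (i + 1) - x i, sub_pos.mpr (hmono (by omega)), fun y hy => ?_⟩
    apply hfp (i + 1)
    rw [add_sub_cancel_right]
    exact ⟨hy.1, by have := hy.2; linarith⟩
  have hLb : ∀ i : ℤ, leftPoly f (x i) = p i := by
    intro i
    apply leftPoly_eq
    refine ⟨x i - x (i - 1), sub_pos.mpr (hmono (by omega)), fun y hy => ?_⟩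
    exact hfp i y ⟨by have := hy.1; linarith, hy.2⟩
  have hR0 : rightPoly f 0 = p a := by
    apply rightPoly_eq
    refine ⟨x a, ha1, fun y hy => ?_⟩
    exact hfp a y ⟨le_trans hxa1 hy.1, by have := hy.2; linarith⟩
  have hL0 : leftPoly f 0 = p a' := by
    apply leftPoly_eq
    refine ⟨-x (a' - 1), by linarith, fun y hy => ?_⟩
    exact hfp a' y ⟨by have := hy.1; linarith, le_trans hy.2 ha'1⟩
  have hf0 : f 0 = (p a).eval 0 := hfp a 0 ⟨hxa1, ha1.le⟩
  have hf0' : f 0 = (p a').eval 0 := hfp a' 0 ⟨hxa'1.le, ha'1⟩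
  have hfr : f r = (p b).eval r := hfp b r ⟨hxb1.le, hb1⟩
  have hfnr : f (-r) = (p c).eval (-r) := hfp c (-r) ⟨hxc1.le, hc1⟩
  -- the jump formula at a breakpoint
  have hjump : ∀ (i : ℤ) (t : ℝ), (p (i + 1)).eval t - (p i).eval t
      = ∑ j ∈ Finset.Icc 1 n, Trop.tau f j (x i) * (t - x i) ^ j := by
    intro i t
    have hq : (p (i + 1) - p i).natDegree ≤ n :=
      le_trans (Polynomial.natDegree_sub_le _ _) (by simp [hdeg])
    have hzero : (p (i + 1) - p i).eval (x i) = 0 := by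
      have e1 : f (x i) = (p i).eval (x i) :=
        hfp i (x i) ⟨(hmono (by omega)).le, le_refl _⟩
      have e2 : f (x i) = (p (i + 1)).eval (x i) := by
        apply hfp (i + 1)
        rw [add_sub_cancel_right]
        exact ⟨le_refl _, (hmono (by omega)).le⟩
      rw [Polynomial.eval_sub, ← e1, ← e2, sub_self]
    have hT := taylor_expand hq (x i) t
    rw [range_succ_eq_insert, Finset.sum_insert (by simp)] at hT
    simp only [Function.iterate_zero, id_eq, pow_zero, Nat.factorial_zero, Nat.cast_one,
      mul_one, div_one, hzero] at hT
    rw [Polynomial.eval_sub] at hT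
    rw [hT, zero_add]
    refine Finset.sum_congr rfl fun j hj => ?_
    rw [Trop.tau, Trop.rderiv, Trop.lderiv, hRb i, hLb i,
      Polynomial.iterate_derivative_sub, Polynomial.eval_sub]
    ring
  -- positive half telescoping
  have Epos : f r = (∑ j ∈ Finset.range (n + 1),
        Trop.rderiv f j 0 * r ^ j / (Nat.factorial j : ℝ))
      + ∑ i ∈ Finset.Ico a b, ∑ j ∈ Finset.Icc 1 n, Trop.tau f j (x i) * (r - x i) ^ j := by
    have htel := telescope (fun i => (p i).eval r) a b hab
    have hsum : ∑ i ∈ Finset.Ico a b, (((p (i + 1)).eval r) - ((p i).eval r))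
        = ∑ i ∈ Finset.Ico a b, ∑ j ∈ Finset.Icc 1 n, Trop.tau f j (x i) * (r - x i) ^ j :=
      Finset.sum_congr rfl fun i _ => hjump i r
    have hta : (p a).eval r = ∑ j ∈ Finset.range (n + 1),
        Trop.rderiv f j 0 * r ^ j / (Nat.factorial j : ℝ) := by
      have h := taylor_expand (hdeg a) 0 r
      simp only [sub_zero] at h
      rw [h]
      refine Finset.sum_congr rfl fun j _ => ?_
      rw [Trop.rderiv, hR0]
    rw [hfr, ← hta]
    have h2 : ∑ i ∈ Finset.Ico a b, ∑ j ∈ Finset.Icc 1 n, Trop.tau f j (x i) * (r - x i) ^ j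
        = (p b).eval r - (p a).eval r := by rw [← hsum]; exact htel
    linarith
  -- negative half telescoping
  have Eneg : f (-r) = (∑ j ∈ Finset.range (n + 1),
        Trop.lderiv f j 0 * (-r) ^ j / (Nat.factorial j : ℝ))
      - ∑ i ∈ Finset.Ico c a', ∑ j ∈ Finset.Icc 1 n, Trop.tau f j (x i) * (-r - x i) ^ j := by
    have htel := telescope (fun i => (p i).eval (-r)) c a' hca'
    have hsum : ∑ i ∈ Finset.Ico c a', (((p (i + 1)).eval (-r)) - ((p i).eval (-r)))
        = ∑ i ∈ Finset.Ico c a', ∑ j ∈ Finset.Icc 1 n, Trop.tau f j (x i) * (-r - x i) ^ j :=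
      Finset.sum_congr rfl fun i _ => hjump i (-r)
    have hta : (p a').eval (-r) = ∑ j ∈ Finset.range (n + 1),
        Trop.lderiv f j 0 * (-r) ^ j / (Nat.factorial j : ℝ) := by
      have h := taylor_expand (hdeg a') 0 (-r)
      simp only [sub_zero] at h
      rw [h]
      refine Finset.sum_congr rfl fun j _ => ?_
      rw [Trop.lderiv, hL0]
    rw [hfnr, ← hta]
    have h2 : ∑ i ∈ Finset.Ico c a', ∑ j ∈ Finset.Icc 1 n, Trop.tau f j (x i) * (-r - x i) ^ j
        = (p a').eval (-r) - (p c).eval (-r) := by rw [← hsum]; exact htel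
    linarith
  -- conversions to omega
  have hO0 : ∀ j : ℕ, Trop.rderiv f j 0 * r ^ j / (Nat.factorial j : ℝ)
      + Trop.lderiv f j 0 * (-r) ^ j / (Nat.factorial j : ℝ)
      = Trop.omega f j 0 * (r - |(0 : ℝ)|) ^ j := by
    intro j
    have hfac : (Nat.factorial j : ℝ) ≠ 0 := Nat.cast_ne_zero.mpr (Nat.factorial_ne_zero j)
    rw [Trop.omega, Trop.sgnR, Trop.sgnL, if_neg (lt_irrefl (0 : ℝ)), if_neg (lt_irrefl (0 : ℝ)),
      one_pow, abs_zero, sub_zero, neg_pow r j, pow_succ]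
    field_simp
    ring
  have hOpos : ∀ i ∈ Finset.Ico a b, ∀ j : ℕ,
      Trop.tau f j (x i) * (r - x i) ^ j = Trop.omega f j (x i) * (r - |x i|) ^ j := by
    intro i hi j
    have hxi : 0 < x i := lt_of_lt_of_le ha1 (hmono.monotone (Finset.mem_Ico.mp hi).1)
    rw [Trop.omega, Trop.tau, Trop.sgnR, Trop.sgnL, if_neg (not_lt.mpr hxi.le), if_pos hxi,
      one_pow, abs_of_pos hxi]
    ring
  have hOneg : ∀ i ∈ Finset.Ico c a', ∀ j : ℕ,
      Trop.tau f j (x i) * (-r - x i) ^ j = -(Trop.omega f j (x i) * (r - |x i|) ^ j) := by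
    intro i hi j
    have hia : i ≤ a' - 1 := by have := (Finset.mem_Ico.mp hi).2; omega
    have hxi : x i < 0 := lt_of_le_of_lt (hmono.monotone hia) hxa'1
    rw [Trop.omega, Trop.tau, Trop.sgnR, Trop.sgnL, if_pos hxi, if_neg (not_lt.mpr hxi.le),
      abs_of_neg hxi, show -r - x i = -(r + x i) by ring, neg_pow (r + x i) j,
      show r - - x i = r + x i by ring, pow_succ]
    have hfac : (Nat.factorial j : ℝ) ≠ 0 := Nat.cast_ne_zero.mpr (Nat.factorial_ne_zero j)
    field_simp
    ring
  -- main identity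
  have hrd0 : Trop.rderiv f 0 0 = f 0 := by
    rw [Trop.rderiv, Function.iterate_zero, id_eq, hR0, ← hf0]
  have hld0 : Trop.lderiv f 0 0 = f 0 := by
    rw [Trop.lderiv, Function.iterate_zero, id_eq, hL0, ← hf0']
  have main : f r + f (-r) = 2 * f 0
      + ∑ j ∈ Finset.Icc 1 n, (Trop.omega f j 0 * (r - |(0 : ℝ)|) ^ j
        + ∑ i ∈ Finset.Ico a b, Trop.omega f j (x i) * (r - |x i|) ^ j
        + ∑ i ∈ Finset.Ico c a', Trop.omega f j (x i) * (r - |x i|) ^ j) := by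
    rw [Epos, Eneg]
    rw [range_succ_eq_insert, Finset.sum_insert (by simp), Finset.sum_insert (by simp)]
    simp only [pow_zero, Nat.factorial_zero, Nat.cast_one, mul_one, div_one, hrd0, hld0]
    have e1 : ∑ j ∈ Finset.Icc 1 n, (Trop.omega f j 0 * (r - |(0 : ℝ)|) ^ j
        + ∑ i ∈ Finset.Ico a b, Trop.omega f j (x i) * (r - |x i|) ^ j
        + ∑ i ∈ Finset.Ico c a', Trop.omega f j (x i) * (r - |x i|) ^ j)
        = ∑ j ∈ Finset.Icc 1 n, Trop.omega f j 0 * (r - |(0 : ℝ)|) ^ j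
        + ∑ j ∈ Finset.Icc 1 n, ∑ i ∈ Finset.Ico a b,
            Trop.omega f j (x i) * (r - |x i|) ^ j
        + ∑ j ∈ Finset.Icc 1 n, ∑ i ∈ Finset.Ico c a',
            Trop.omega f j (x i) * (r - |x i|) ^ j := by
      rw [← Finset.sum_add_distrib, ← Finset.sum_add_distrib]
    rw [e1]
    have e2 : ∑ j ∈ Finset.Icc 1 n, Trop.rderiv f j 0 * r ^ j / (Nat.factorial j : ℝ)
        + ∑ j ∈ Finset.Icc 1 n, Trop.lderiv f j 0 * (-r) ^ j / (Nat.factorial j : ℝ)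
        = ∑ j ∈ Finset.Icc 1 n, Trop.omega f j 0 * (r - |(0 : ℝ)|) ^ j := by
      rw [← Finset.sum_add_distrib]
      exact Finset.sum_congr rfl fun j _ => hO0 j
    have e3 : ∑ i ∈ Finset.Ico a b, ∑ j ∈ Finset.Icc 1 n, Trop.tau f j (x i) * (r - x i) ^ j
        = ∑ j ∈ Finset.Icc 1 n, ∑ i ∈ Finset.Ico a b,
            Trop.omega f j (x i) * (r - |x i|) ^ j := by
      rw [Finset.sum_comm]
      exact Finset.sum_congr rfl fun j _ => Finset.sum_congr rfl fun i hi => hOpos i hi j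
    have e4 : ∑ i ∈ Finset.Ico c a', ∑ j ∈ Finset.Icc 1 n, Trop.tau f j (x i) * (-r - x i) ^ j
        = -∑ j ∈ Finset.Icc 1 n, ∑ i ∈ Finset.Ico c a',
            Trop.omega f j (x i) * (r - |x i|) ^ j := by
      rw [Finset.sum_comm, ← Finset.sum_neg_distrib]
      exact Finset.sum_congr rfl fun j _ =>
        (by rw [← Finset.sum_neg_distrib]
            exact Finset.sum_congr rfl fun i hi => hOneg i hi j)
    rw [e3, e4]
    linarith
  -- the finite support set
  set A : Finset ℝ := (Finset.Ico a b).image x with hA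
  set B : Finset ℝ := (Finset.Ico c a').image x with hB
  have hApos : ∀ z ∈ A, 0 < z := by
    intro z hz
    obtain ⟨i, hi, rfl⟩ := Finset.mem_image.mp hz
    exact lt_of_lt_of_le ha1 (hmono.monotone (Finset.mem_Ico.mp hi).1)
  have hBneg : ∀ z ∈ B, z < 0 := by
    intro z hz
    obtain ⟨i, hi, rfl⟩ := Finset.mem_image.mp hz
    have hia : i ≤ a' - 1 := by have := (Finset.mem_Ico.mp hi).2; omega
    exact lt_of_le_of_lt (hmono.monotone hia) hxa'1
  have h0AB : (0 : ℝ) ∉ A ∪ B := by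
    intro h
    rcases Finset.mem_union.mp h with h | h
    · exact lt_irrefl 0 (hApos 0 h)
    · exact lt_irrefl 0 (hBneg 0 h)
  set T : Finset ℝ := insert 0 (A ∪ B) with hT
  -- vanishing of omega away from breakpoints and 0
  have hvan : ∀ z : ℝ, z ≠ 0 → (∀ i, x i ≠ z) → ∀ j, Trop.omega f j z = 0 := by
    intro z hz hbz j
    obtain ⟨i, hi1, hi2⟩ := hleast z
    have hle : x (i - 1) ≤ z := by
      by_contra hcon; push_neg at hcon
      have := hi2 _ hcon; omega
    have hlt : x (i - 1) < z := lt_of_le_of_ne hle (hbz (i - 1))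
    have hRz : rightPoly f z = p i := by
      apply rightPoly_eq
      refine ⟨x i - z, by linarith, fun y hy => ?_⟩
      exact hfp i y ⟨le_trans hle hy.1, by have := hy.2; linarith⟩
    have hLz : leftPoly f z = p i := by
      apply leftPoly_eq
      refine ⟨z - x (i - 1), by linarith, fun y hy => ?_⟩
      exact hfp i y ⟨by have := hy.1; linarith, le_trans hy.2 hi1.le⟩
    have hsg : Trop.sgnR z = Trop.sgnL z := by
      rcases lt_trichotomy z 0 with h | h | h
      · rw [Trop.sgnR, Trop.sgnL, if_pos h, if_neg (not_lt.mpr h.le)]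
      · exact absurd h hz
      · rw [Trop.sgnR, Trop.sgnL, if_neg (not_lt.mpr h.le), if_pos h]
    rw [Trop.omega, Trop.rderiv, Trop.lderiv, hRz, hLz, hsg, sub_self, zero_div]
  -- nonzero omega in (-r, r) implies membership in T
  have hT1 : ∀ (j : ℕ) (z : ℝ), z ∈ Set.Ioo (-r) r → Trop.omega f j z ≠ 0 → z ∈ T := by
    intro j z hzI hω
    by_cases hz0 : z = 0
    · rw [hz0]; exact Finset.mem_insert_self _ _
    · have : ¬ ∀ i, x i ≠ z := fun h => hω (hvan z hz0 h j)
      push_neg at this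
      obtain ⟨i, hi⟩ := this
      refine Finset.mem_insert_of_mem (Finset.mem_union.mpr ?_)
      rcases lt_trichotomy z 0 with h | h | h
      · right
        refine Finset.mem_image.mpr ⟨i, Finset.mem_Ico.mpr ⟨?_, ?_⟩, hi⟩
        · exact hc2 i (by rw [hi]; exact hzI.1.le)
        · by_contra hcon; push_neg at hcon
          have : (0 : ℝ) ≤ x i := le_trans ha'1 (hmono.monotone hcon)
          rw [hi] at this; linarith
      · exact absurd h hz0
      · left
        refine Finset.mem_image.mpr ⟨i, Finset.mem_Ico.mpr ⟨?_, ?_⟩, hi⟩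
        · exact ha2 i (by rw [hi]; exact h)
        · by_contra hcon; push_neg at hcon
          have : r ≤ x i := le_trans hb1 (hmono.monotone hcon)
          rw [hi] at this; exact absurd hzI.2 (not_lt.mpr this)
  -- elements of T outside the open interval are at distance r
  have hT2 : ∀ z ∈ T, z ∉ Set.Ioo (-r) r → |z| = r := by
    intro z hz hzI
    rcases Finset.mem_insert.mp hz with h | h
    · exact absurd (h ▸ Set.mem_Ioo.mpr ⟨by linarith, hr⟩) hzI
    rcases Finset.mem_union.mp h with h | h
    · obtain ⟨i, hi, rfl⟩ := Finset.mem_image.mp h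
      have h1 : 0 < x i := hApos _ h
      have h2 : x i < r := by
        have hib : i ≤ b - 1 := by have := (Finset.mem_Ico.mp hi).2; omega
        exact lt_of_le_of_lt (hmono.monotone hib) hxb1
      exact absurd (Set.mem_Ioo.mpr ⟨by linarith, h2⟩) hzI
    · obtain ⟨i, hi, rfl⟩ := Finset.mem_image.mp h
      have h1 : x i < 0 := hBneg _ h
      have h2 : -r ≤ x i := le_trans hc1 (hmono.monotone (Finset.mem_Ico.mp hi).1)
      have h3 : x i = -r := by
        rcases eq_or_lt_of_le h2 with h | h
        · exact h.symm
        · exact absurd (Set.mem_Ioo.mpr ⟨h, by linarith⟩) hzI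
      rw [h3, abs_neg, abs_of_pos hr]
  -- evaluate the tsums as finite sums over T
  have hinj : ∀ s : Finset ℤ, ∀ i ∈ s, ∀ k ∈ s, x i = x k → i = k :=
    fun s i _ k _ h => hmono.injective h
  have hABdisj : Disjoint A B := by
    rw [Finset.disjoint_left]
    intro z hz1 hz2
    exact absurd (hApos z hz1) (not_lt.mpr (hBneg z hz2).le)
  have hsumT : ∀ j : ℕ, ∑ z ∈ T, Trop.omega f j z * (r - |z|) ^ j
      = Trop.omega f j 0 * (r - |(0 : ℝ)|) ^ j
        + ∑ i ∈ Finset.Ico a b, Trop.omega f j (x i) * (r - |x i|) ^ j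
        + ∑ i ∈ Finset.Ico c a', Trop.omega f j (x i) * (r - |x i|) ^ j := by
    intro j
    rw [hT, Finset.sum_insert h0AB, Finset.sum_union hABdisj,
      Finset.sum_image (hinj _), Finset.sum_image (hinj _)]
    ring
  have hpole : ∀ j : ℕ, Trop.Npole j r f = (1 / 2) * ∑ z ∈ T,
      (if z ∈ Set.Ioo (-r) r ∧ Trop.omega f j z < 0
        then |Trop.omega f j z| * (r - |z|) ^ j else 0) := by
    intro j
    rw [Trop.Npole]
    congr 1
    have h1 : (∑' z : {z : ℝ // z ∈ Set.Ioo (-r) r ∧ Trop.omega f j z < 0},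
          |Trop.omega f j z.1| * (r - |z.1|) ^ j)
        = ∑' z : ℝ, Set.indicator {z : ℝ | z ∈ Set.Ioo (-r) r ∧ Trop.omega f j z < 0}
            (fun z => |Trop.omega f j z| * (r - |z|) ^ j) z :=
      tsum_subtype {z : ℝ | z ∈ Set.Ioo (-r) r ∧ Trop.omega f j z < 0}
        (fun z => |Trop.omega f j z| * (r - |z|) ^ j)
    rw [h1]
    rw [tsum_eq_sum (s := T) (fun z hz => by
      by_cases hmem : z ∈ {z : ℝ | z ∈ Set.Ioo (-r) r ∧ Trop.omega f j z < 0}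
      · exact absurd (hT1 j z hmem.1 (ne_of_lt hmem.2)) hz
      · exact Set.indicator_of_notMem hmem _)]
    exact Finset.sum_congr rfl fun z _ => by
      rw [Set.indicator_apply]
      rfl
  have hroot : ∀ j : ℕ, Trop.Nroot j r f = (1 / 2) * ∑ z ∈ T,
      (if z ∈ Set.Ioo (-r) r ∧ 0 < Trop.omega f j z
        then |Trop.omega f j z| * (r - |z|) ^ j else 0) := by
    intro j
    rw [Trop.Nroot]
    congr 1
    have h1 : (∑' z : {z : ℝ // z ∈ Set.Ioo (-r) r ∧ 0 < Trop.omega f j z},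
          |Trop.omega f j z.1| * (r - |z.1|) ^ j)
        = ∑' z : ℝ, Set.indicator {z : ℝ | z ∈ Set.Ioo (-r) r ∧ 0 < Trop.omega f j z}
            (fun z => |Trop.omega f j z| * (r - |z|) ^ j) z :=
      tsum_subtype {z : ℝ | z ∈ Set.Ioo (-r) r ∧ 0 < Trop.omega f j z}
        (fun z => |Trop.omega f j z| * (r - |z|) ^ j)
    rw [h1]
    rw [tsum_eq_sum (s := T) (fun z hz => by
      by_cases hmem : z ∈ {z : ℝ | z ∈ Set.Ioo (-r) r ∧ 0 < Trop.omega f j z}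
      · exact absurd (hT1 j z hmem.1 (ne_of_gt hmem.2)) hz
      · exact Set.indicator_of_notMem hmem _)]
    exact Finset.sum_congr rfl fun z _ => by
      rw [Set.indicator_apply]
      rfl
  have key2 : ∀ j ∈ Finset.Icc 1 n, Trop.Npole j r f - Trop.Nroot j r f
      = -(1 / 2) * ∑ z ∈ T, Trop.omega f j z * (r - |z|) ^ j := by
    intro j hj
    have hj1 : 1 ≤ j := (Finset.mem_Icc.mp hj).1
    rw [hpole j, hroot j, ← mul_sub, ← Finset.sum_sub_distrib]
    have : ∀ z ∈ T,
        (if z ∈ Set.Ioo (-r) r ∧ Trop.omega f j z < 0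
          then |Trop.omega f j z| * (r - |z|) ^ j else 0)
        - (if z ∈ Set.Ioo (-r) r ∧ 0 < Trop.omega f j z
          then |Trop.omega f j z| * (r - |z|) ^ j else 0)
        = -(Trop.omega f j z * (r - |z|) ^ j) := by
      intro z hz
      by_cases hzI : z ∈ Set.Ioo (-r) r
      · rcases lt_trichotomy (Trop.omega f j z) 0 with h | h | h
        · rw [if_pos ⟨hzI, h⟩, if_neg (fun hh => absurd hh.2 (not_lt.mpr h.le)),
            abs_of_neg h]
          ring
        · simp [h]
        · rw [if_neg (fun hh => absurd hh.2 (not_lt.mpr h.le)), if_pos ⟨hzI, h⟩,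
            abs_of_pos h]
          ring
      · have habs : |z| = r := hT2 z hz hzI
        rw [if_neg (fun hh => hzI hh.1), if_neg (fun hh => hzI hh.1), habs, sub_self r,
          zero_pow (by omega : j ≠ 0)]
        ring
    rw [Finset.sum_congr rfl this, Finset.sum_neg_distrib]
    ring
  -- conclude
  have hsum2 : ∑ j ∈ Finset.Icc 1 n, Trop.Npole j r f
      - ∑ j ∈ Finset.Icc 1 n, Trop.Nroot j r f
      = -(1 / 2) * ∑ j ∈ Finset.Icc 1 n, (Trop.omega f j 0 * (r - |(0 : ℝ)|) ^ j
        + ∑ i ∈ Finset.Ico a b, Trop.omega f j (x i) * (r - |x i|) ^ j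
        + ∑ i ∈ Finset.Ico c a', Trop.omega f j (x i) * (r - |x i|) ^ j) := by
    rw [← Finset.sum_sub_distrib, Finset.mul_sum]
    refine Finset.sum_congr rfl fun j hj => ?_
    rw [key2 j hj, hsumT j]
  linear_combination (-1 / 2 : ℝ) * main - hsum2


end TropAux
end

/-- the `n`-th tropical Jensen formula. -/
theorem statement4 (n : ℕ) (hn : 1 ≤ n) (r : ℝ) (hr : 0 < r) (f : ℝ → ℝ)
    (hf : Trop.IsTropicalMeromorphic n f) :
    f 0 = (f r + f (-r)) / 2
      - ∑ j ∈ Finset.Icc 1 n, Trop.Nroot j r f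
      + ∑ j ∈ Finset.Icc 1 n, Trop.Npole j r f := by
  obtain ⟨⟨hcont, x, p, hmono, htop, hbot, hfp, hdeg, -⟩, -⟩ := hf
  exact TropAux.jensen_core n hn r hr f x p hmono htop hbot hfp hdeg
end
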